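/- arXiv:2501.19067 — 3 statements merged into one kernel-verified Lean document; each statement's English description precedes it below -/
import Mathlib

section
/- Let n, m be positive integers. For each task i ∈ {1,…,n}, let Z_i be a measurable space, p_i a probability measure on Z_i, and for a hypothesis set F let ℓ_i : F × Z_i → [0,1] be a loss function, measurable in its second argument for each fixed hypothesis. Let the training data consist of n independent samples S_i = (z_{i,1},…,z_{i,m}), where each S_i is drawn i.i.d. from p_i. Let 𝓔 be a countable set of global parameters with a length function l : 𝓔 → ℕ arising from a prefix-free encoding of 𝓔, and for each E ∈ 𝓔 let l_E : ⋃_{n≥1} F^n → ℕ be a length function arising from a prefix-free encoding of tuples of hypotheses. Then for any δ > 0, with probability at least 1 − δ over the sampling of the training data, simultaneously for all E ∈ 𝓔 and all f_1,…,f_n ∈ F the following inequality holds: kl( R̂(f_1,…,f_n) | R(f_1,…,f_n) ) ≤ ( (l(E) + l_E(f_1,…,f_n))·log 2 + log(2·sqrt(mn)/δ) ) / (mn). -/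
open MeasureTheory

/-- A prefix-free encoding: an injective map into finite binary strings such that
no codeword is a prefix of another codeword. -/
def PrefixFreeCode {α : Type*} (c : α → List Bool) : Prop :=
  Function.Injective c ∧ ∀ a b : α, a ≠ b → ¬ c a <+: c b

/-- Kullback–Leibler divergence `kl(q|p)` between Bernoulli distributions with means
`q` and `p`, with the conventions `0·log 0 = 0` and `kl(q|p) = +∞` when the support
condition fails. -/
noncomputable def bernKL (q P : ℝ) : EReal :=
  if (0 < q ∧ P = 0) ∨ (q < 1 ∧ P = 1) then ⊤
  else ((q * Real.log (q / P) + (1 - q) * Real.log ((1 - q) / (1 - P)) : ℝ) : EReal)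

section MTCBaux
open Real Filter

namespace MTCB

noncomputable def lval : List Bool → ℝ
  | [] => 0
  | b :: t => (if b then (1:ℝ) else 0) / 2 + lval t / 2

lemma lval_nonneg : ∀ w : List Bool, 0 ≤ lval w
  | [] => le_refl 0
  | b :: t => by
      have := lval_nonneg t
      simp only [lval]
      cases b <;> simp <;> linarith

lemma lval_add_le : ∀ w : List Bool, lval w + (1/2:ℝ) ^ w.length ≤ 1
  | [] => by simp [lval]
  | b :: t => by
      have h1 := lval_add_le t
      have h2 : ((2:ℝ) ^ t.length)⁻¹ = (1/2:ℝ) ^ t.length := by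
        rw [one_div, inv_pow]
      simp only [lval, List.length_cons, pow_succ]
      cases b <;> simp <;> rw [h2] <;> linarith

noncomputable def lIco (w : List Bool) : Set ℝ :=
  Set.Ico (lval w) (lval w + (1/2:ℝ) ^ w.length)

lemma overlap_prefix : ∀ w u : List Bool, (lIco w ∩ lIco u).Nonempty →
    w <+: u ∨ u <+: w
  | [], u, _ => Or.inl (List.nil_prefix)
  | _ :: _, [], _ => Or.inr (List.nil_prefix)
  | b :: w, c :: u, h => by
      obtain ⟨x, hxw, hxu⟩ := h
      have hw0 := lval_nonneg w
      have hu0 := lval_nonneg u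
      have hw1 := lval_add_le w
      have hu1 := lval_add_le u
      simp only [lIco, Set.mem_Ico, lval, List.length_cons, pow_succ] at hxw hxu
      have hbc : b = c := by
        cases b <;> cases c <;> simp_all <;> nlinarith
      subst hbc
      have key : (lIco w ∩ lIco u).Nonempty := by
        refine ⟨2 * x - (if b then (1:ℝ) else 0), ?_, ?_⟩ <;>
          (constructor) <;> cases b <;> simp_all <;> nlinarith
      rcases overlap_prefix w u key with h' | h'
      · exact Or.inl (List.cons_prefix_cons.2 ⟨rfl, h'⟩)
      · exact Or.inr (List.cons_prefix_cons.2 ⟨rfl, h'⟩)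

lemma kraft {α : Type*} (c : α → List Bool) (h : PrefixFreeCode c) :
    ∑' a, ENNReal.ofReal ((1/2:ℝ) ^ (c a).length) ≤ 1 := by
  rw [ENNReal.tsum_eq_iSup_sum]
  refine iSup_le fun s => ?_
  have hdisj : (s : Set α).PairwiseDisjoint (fun a => lIco (c a)) := by
    intro a _ b _ hab
    refine Set.disjoint_left.2 fun x hxa hxb => ?_
    have hne : c a ≠ c b := fun hc => hab (h.1 hc)
    rcases overlap_prefix (c a) (c b) ⟨x, hxa, hxb⟩ with h' | h'
    · exact h.2 a b hab h'
    · exact h.2 b a (Ne.symm hab) h'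
  have hvol : ∀ a : α, volume (lIco (c a)) = ENNReal.ofReal ((1/2:ℝ) ^ (c a).length) := by
    intro a
    rw [lIco, Real.volume_Ico]
    congr 1
    ring
  calc ∑ a ∈ s, ENNReal.ofReal ((1/2:ℝ) ^ (c a).length)
      = ∑ a ∈ s, volume (lIco (c a)) := by simp_rw [hvol]
    _ = volume (⋃ a ∈ s, lIco (c a)) :=
        (measure_biUnion_finset hdisj fun a _ => measurableSet_Ico).symm
    _ ≤ volume (Set.Ico (0:ℝ) 1) := by
        refine measure_mono ?_
        refine Set.iUnion₂_subset fun a _ => ?_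
        intro x hx
        obtain ⟨h1, h2⟩ := hx
        exact ⟨(lval_nonneg _).trans h1, lt_of_lt_of_le h2 (lval_add_le _)⟩
    _ = 1 := by simp

end MTCB

namespace MTCB

noncomputable def klF (p x : ℝ) : ℝ :=
  x * Real.log (x / p) + (1 - x) * Real.log ((1 - x) / (1 - p))

lemma klF_self {p : ℝ} (hp0 : 0 < p) (hp1 : p < 1) : klF p p = 0 := by
  simp [klF, div_self hp0.ne', div_self (by linarith : (1:ℝ) - p ≠ 0)]

lemma klF_one {p : ℝ} (hp0 : 0 < p) : klF p 1 = - Real.log p := by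
  simp [klF, Real.log_div one_ne_zero hp0.ne']

lemma klF_symm (p x : ℝ) : klF p x = klF (1 - p) (1 - x) := by
  simp only [klF, sub_sub_cancel]
  ring

lemma continuousOn_klF {p : ℝ} (hp0 : 0 < p) (hp1 : p < 1) :
    ContinuousOn (klF p) (Set.Icc p 1) := by
  have hg : Continuous fun x : ℝ =>
      x * Real.log x - x * Real.log p + ((1 - x) * Real.log (1 - x) - (1 - x) * Real.log (1 - p)) := by
    have h1 : Continuous fun x : ℝ => x * Real.log x := Real.continuous_mul_log
    have h2 : Continuous fun x : ℝ => (1 - x) * Real.log (1 - x) :=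
      Real.continuous_mul_log.comp (continuous_const.sub continuous_id)
    fun_prop
  refine hg.continuousOn.congr fun x hx => ?_
  obtain ⟨hxp, hx1⟩ := hx
  have hx0 : 0 < x := lt_of_lt_of_le hp0 hxp
  unfold klF
  rcases eq_or_lt_of_le hx1 with h1 | h1
  · subst h1; simp [Real.log_div one_ne_zero hp0.ne']
  · rw [Real.log_div hx0.ne' hp0.ne',
      Real.log_div (by linarith : (1:ℝ) - x ≠ 0) (by linarith : (1:ℝ) - p ≠ 0)]
    ring

end MTCB

namespace MTCB

variable {Ω : Type*} [MeasurableSpace Ω] (μ : Measure Ω) [IsProbabilityMeasure μ]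

lemma integrable_exp_bdd {X : Ω → ℝ} {B : ℝ} (hB : 0 ≤ B) (hXm : Measurable X)
    (h0 : ∀ ω, 0 ≤ X ω) (h1 : ∀ ω, X ω ≤ B) (t : ℝ) :
    Integrable (fun ω => Real.exp (t * X ω)) μ := by
  refine Integrable.mono' (integrable_const (Real.exp (|t| * B))) ?_ ?_
  · exact (Real.continuous_exp.comp (continuous_const.mul continuous_id)).measurable.comp hXm
      |>.aestronglyMeasurable
  · refine ae_of_all _ fun ω => ?_
    rw [Real.norm_eq_abs, Real.abs_exp, Real.exp_le_exp]
    calc t * X ω ≤ |t * X ω| := le_abs_self _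
      _ = |t| * |X ω| := abs_mul t (X ω)
      _ ≤ |t| * B := by
          refine mul_le_mul_of_nonneg_left ?_ (abs_nonneg t)
          rw [abs_of_nonneg (h0 ω)]; exact h1 ω

/-- Chernoff bound at a point `a ∈ [p, 1)`. -/
lemma chernoff_point {X : Ω → ℝ} (hXm : Measurable X) (h0 : ∀ ω, 0 ≤ X ω)
    (h1 : ∀ ω, X ω ≤ 1) {N : ℕ} (hN : 0 < N) {p : ℝ} (hp0 : 0 < p) (hp1 : p < 1)
    (hmgf : ∀ t : ℝ, 0 ≤ t →
      ∫ ω, Real.exp (t * (N * X ω)) ∂μ ≤ (1 - p + p * Real.exp t) ^ N)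
    {a : ℝ} (hpa : p ≤ a) (ha1 : a < 1) :
    (μ {ω | a ≤ X ω}).toReal ≤ Real.exp (-(N * klF p a)) := by
  have ha0 : 0 < a := lt_of_lt_of_le hp0 hpa
  have h1a : 0 < 1 - a := by linarith
  have h1p : 0 < 1 - p := by linarith
  set lam : ℝ := Real.log (a * (1 - p) / ((1 - a) * p)) with hlam
  have hratio : 1 ≤ a * (1 - p) / ((1 - a) * p) := by
    rw [le_div_iff₀ (by positivity)]
    nlinarith
  have hlam0 : 0 ≤ lam := Real.log_nonneg hratio
  have hexplam : Real.exp lam = a * (1 - p) / ((1 - a) * p) :=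
    Real.exp_log (by positivity)
  have hint : ∀ t : ℝ, Integrable (fun ω => Real.exp (t * ((N : ℝ) * X ω))) μ :=
    fun t => integrable_exp_bdd μ (Nat.cast_nonneg N) (hXm.const_mul (N : ℝ))
      (fun ω => mul_nonneg (Nat.cast_nonneg N) (h0 ω))
      (fun ω => by
        calc (N : ℝ) * X ω ≤ (N : ℝ) * 1 :=
              mul_le_mul_of_nonneg_left (h1 ω) (Nat.cast_nonneg N)
          _ = N := mul_one _) t
  have hset : {ω | (N : ℝ) * a ≤ (N : ℝ) * X ω} = {ω | a ≤ X ω} := by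
    ext ω
    simp only [Set.mem_setOf_eq]
    exact mul_le_mul_iff_right₀ (by positivity : (0:ℝ) < (N:ℝ))
  have hcher := ProbabilityTheory.measure_ge_le_exp_mul_mgf (μ := μ)
    (X := fun ω => (N : ℝ) * X ω) ((N : ℝ) * a) hlam0 (hint lam)
  rw [hset] at hcher
  refine hcher.trans ?_
  have hmgf' : ProbabilityTheory.mgf (fun ω => (N : ℝ) * X ω) μ lam
      ≤ (1 - p + p * Real.exp lam) ^ N := hmgf lam hlam0
  calc Real.exp (-lam * ((N:ℝ) * a)) * ProbabilityTheory.mgf (fun ω => (N : ℝ) * X ω) μ lam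
      ≤ Real.exp (-lam * ((N:ℝ) * a)) * (1 - p + p * Real.exp lam) ^ N := by
        exact mul_le_mul_of_nonneg_left hmgf' (Real.exp_nonneg _)
    _ = Real.exp (-(N * klF p a)) := by
        have hbase : 1 - p + p * Real.exp lam = (1 - p) / (1 - a) := by
          rw [hexplam]; field_simp; ring
        rw [hbase]
        have hpow : ((1 - p) / (1 - a)) ^ N = Real.exp (N * Real.log ((1-p)/(1-a))) := by
          rw [← Real.log_pow, Real.exp_log (by positivity)]
        rw [hpow, ← Real.exp_add]
        congr 1
        have hexpand : klF p a =
            a * (Real.log a - Real.log p) + (1 - a) * (Real.log (1-a) - Real.log (1-p)) := by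
          unfold klF
          rw [Real.log_div ha0.ne' hp0.ne', Real.log_div h1a.ne' h1p.ne']
        rw [hexpand, hlam, Real.log_div (by positivity) (by positivity),
          Real.log_mul ha0.ne' h1p.ne', Real.log_mul h1a.ne' hp0.ne',
          Real.log_div h1p.ne' h1a.ne']
        ring

end MTCB

namespace MTCB2
open MTCB

variable {Ω : Type*} [MeasurableSpace Ω] (μ : Measure Ω) [IsProbabilityMeasure μ]

lemma chernoff_one {X : Ω → ℝ} (hXm : Measurable X) (h0 : ∀ ω, 0 ≤ X ω)
    (h1 : ∀ ω, X ω ≤ 1) {N : ℕ} (hN : 0 < N) {p : ℝ} (hp0 : 0 < p) (hp1 : p < 1)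
    (hmgf : ∀ t : ℝ, 0 ≤ t →
      ∫ ω, Real.exp (t * (N * X ω)) ∂μ ≤ (1 - p + p * Real.exp t) ^ N) :
    (μ {ω | 1 ≤ X ω}).toReal ≤ Real.exp (-(N * klF p 1)) := by
  have hint : ∀ t : ℝ, Integrable (fun ω => Real.exp (t * ((N : ℝ) * X ω))) μ :=
    fun t => integrable_exp_bdd μ (Nat.cast_nonneg N) (hXm.const_mul (N : ℝ))
      (fun ω => mul_nonneg (Nat.cast_nonneg N) (h0 ω))
      (fun ω => by
        calc (N : ℝ) * X ω ≤ (N : ℝ) * 1 :=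
              mul_le_mul_of_nonneg_left (h1 ω) (Nat.cast_nonneg N)
          _ = N := mul_one _) t
  have hset : {ω | (N : ℝ) * 1 ≤ (N : ℝ) * X ω} = {ω | 1 ≤ X ω} := by
    ext ω
    simp only [Set.mem_setOf_eq]
    exact mul_le_mul_iff_right₀ (by positivity : (0:ℝ) < (N:ℝ))
  -- bound for every t ≥ 0
  have hbd : ∀ t : ℝ, 0 ≤ t →
      (μ {ω | 1 ≤ X ω}).toReal ≤ ((1 - p) * Real.exp (-t) + p) ^ N := by
    intro t ht
    have hcher := ProbabilityTheory.measure_ge_le_exp_mul_mgf (μ := μ)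
      (X := fun ω => (N : ℝ) * X ω) ((N : ℝ) * 1) ht (hint t)
    rw [hset] at hcher
    refine hcher.trans ?_
    have hm := hmgf t ht
    calc Real.exp (-t * ((N:ℝ) * 1)) * ProbabilityTheory.mgf (fun ω => (N : ℝ) * X ω) μ t
        ≤ Real.exp (-t * ((N:ℝ) * 1)) * (1 - p + p * Real.exp t) ^ N :=
          mul_le_mul_of_nonneg_left hm (Real.exp_nonneg _)
      _ = ((1 - p) * Real.exp (-t) + p) ^ N := by
          rw [mul_one, show (-t * (N:ℝ)) = (N:ℝ) * (-t) by ring, Real.exp_nat_mul,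
            ← mul_pow]
          congr 1
          rw [Real.exp_neg]
          have hexp : Real.exp t > 0 := Real.exp_pos t
          field_simp
  -- take the limit t → ∞
  have hlim : Filter.Tendsto (fun t : ℝ => ((1 - p) * Real.exp (-t) + p) ^ N)
      Filter.atTop (nhds (p ^ N)) := by
    have h1 : Filter.Tendsto (fun t : ℝ => (1 - p) * Real.exp (-t) + p)
        Filter.atTop (nhds p) := by
      have := Real.tendsto_exp_neg_atTop_nhds_zero
      have h2 := this.const_mul (1 - p)
      simpa using h2.add_const p
    simpa using h1.pow N
  have : (μ {ω | 1 ≤ X ω}).toReal ≤ p ^ N :=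
    ge_of_tendsto hlim (Filter.eventually_atTop.2 ⟨0, fun t ht => hbd t ht⟩)
  refine this.trans_eq ?_
  rw [klF_one hp0]
  rw [show -((N:ℝ) * - Real.log p) = (N:ℝ) * Real.log p by ring, Real.exp_nat_mul,
    Real.exp_log hp0]

end MTCB2

namespace MTCB3
open MTCB MTCB2

variable {Ω : Type*} [MeasurableSpace Ω] (μ : Measure Ω) [IsProbabilityMeasure μ]

/-- Upper-tail kl Chernoff bound. -/
lemma upper_tail {X : Ω → ℝ} (hXm : Measurable X) (h0 : ∀ ω, 0 ≤ X ω)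
    (h1 : ∀ ω, X ω ≤ 1) {N : ℕ} (hN : 0 < N) {p : ℝ} (hp0 : 0 < p) (hp1 : p < 1)
    (hmgf : ∀ t : ℝ, 0 ≤ t →
      ∫ ω, Real.exp (t * (N * X ω)) ∂μ ≤ (1 - p + p * Real.exp t) ^ N)
    {c : ℝ} (hc : 0 ≤ c) :
    μ {ω | p < X ω ∧ c < klF p (X ω)} ≤ ENNReal.ofReal (Real.exp (-(N * c))) := by
  set A : Set ℝ := {x | p < x ∧ x ≤ 1 ∧ c < klF p x} with hA
  rcases A.eq_empty_or_nonempty with hAe | hAne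
  · have : {ω | p < X ω ∧ c < klF p (X ω)} = ∅ := by
      ext ω
      simp only [Set.mem_setOf_eq, Set.mem_empty_iff_false, iff_false, not_and]
      intro hpx hkl
      have : X ω ∈ A := ⟨hpx, h1 ω, hkl⟩
      rw [hAe] at this
      exact this.elim
    rw [this]
    simp
  have hbdd : BddBelow A := ⟨p, fun x hx => hx.1.le⟩
  set a := sInf A with ha
  have hpa : p ≤ a := le_csInf hAne fun x hx => hx.1.le
  have ha1 : a ≤ 1 := by
    obtain ⟨x, hx⟩ := hAne
    exact (csInf_le hbdd hx).trans hx.2.1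
  -- `klF p a ≥ c` by continuity
  have hKa : c ≤ klF p a := by
    obtain ⟨u, hanti, hu, humem⟩ := exists_seq_tendsto_sInf hAne hbdd
    have haI : a ∈ Set.Icc p 1 := ⟨hpa, ha1⟩
    have hcont := (continuousOn_klF hp0 hp1) a haI
    have huI : ∀ k, u k ∈ Set.Icc p 1 := fun k => ⟨(humem k).1.le, (humem k).2.1⟩
    have htend : Filter.Tendsto (fun k => klF p (u k)) Filter.atTop (nhds (klF p a)) := by
      refine hcont.tendsto.comp ?_
      rw [tendsto_nhdsWithin_iff]
      exact ⟨hu, Filter.Eventually.of_forall huI⟩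
    exact ge_of_tendsto htend (Filter.Eventually.of_forall fun k => (humem k).2.2.le)
  have hsub : {ω | p < X ω ∧ c < klF p (X ω)} ⊆ {ω | a ≤ X ω} := by
    intro ω hω
    exact csInf_le hbdd ⟨hω.1, h1 ω, hω.2⟩
  have hfin : μ {ω | a ≤ X ω} ≠ ⊤ := measure_ne_top μ _
  have key : (μ {ω | a ≤ X ω}).toReal ≤ Real.exp (-(N * c)) := by
    have hmono : Real.exp (-(N * klF p a)) ≤ Real.exp (-(N * c)) := by
      apply Real.exp_le_exp.2
      have : (N:ℝ) * c ≤ (N:ℝ) * klF p a :=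
        mul_le_mul_of_nonneg_left hKa (Nat.cast_nonneg N)
      linarith
    rcases eq_or_lt_of_le ha1 with h | h
    · rw [h]
      exact (chernoff_one μ hXm h0 h1 hN hp0 hp1 hmgf).trans (by rw [← h]; exact hmono)
    · exact (chernoff_point μ hXm h0 h1 hN hp0 hp1 hmgf hpa h).trans hmono
  calc μ {ω | p < X ω ∧ c < klF p (X ω)} ≤ μ {ω | a ≤ X ω} := measure_mono hsub
    _ ≤ ENNReal.ofReal (Real.exp (-(N * c))) := by
        rw [← ENNReal.ofReal_toReal hfin]
        exact ENNReal.ofReal_le_ofReal key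

/-- Degenerate case: if the mgf of `N⋅X` is at most 1 for all `t ≥ 0` then `X ≤ 0` a.s. -/
lemma degenerate_tail {X : Ω → ℝ} (hXm : Measurable X) (h0 : ∀ ω, 0 ≤ X ω)
    (h1 : ∀ ω, X ω ≤ 1) {N : ℕ} (hN : 0 < N)
    (hmgf : ∀ t : ℝ, 0 ≤ t → ∫ ω, Real.exp (t * (N * X ω)) ∂μ ≤ 1) :
    μ {ω | 0 < X ω} = 0 := by
  have hint : ∀ t : ℝ, Integrable (fun ω => Real.exp (t * ((N : ℝ) * X ω))) μ :=
    fun t => integrable_exp_bdd μ (Nat.cast_nonneg N) (hXm.const_mul (N : ℝ))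
      (fun ω => mul_nonneg (Nat.cast_nonneg N) (h0 ω))
      (fun ω => by
        calc (N : ℝ) * X ω ≤ (N : ℝ) * 1 :=
              mul_le_mul_of_nonneg_left (h1 ω) (Nat.cast_nonneg N)
          _ = N := mul_one _) t
  have hsub : {ω | 0 < X ω} = ⋃ k : ℕ, {ω | 1/(k+1 : ℝ) ≤ X ω} := by
    ext ω
    simp only [Set.mem_setOf_eq, Set.mem_iUnion]
    constructor
    · intro h
      obtain ⟨k, hk⟩ := exists_nat_one_div_lt h
      exact ⟨k, hk.le⟩
    · intro ⟨k, hk⟩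
      exact lt_of_lt_of_le (by positivity) hk
  rw [hsub]
  refine measure_iUnion_null fun k => ?_
  set a : ℝ := 1/(k+1 : ℝ) with haa
  have ha0 : 0 < a := by positivity
  have hbd : ∀ t : ℝ, 0 ≤ t → (μ {ω | a ≤ X ω}).toReal ≤ Real.exp (-t * ((N:ℝ) * a)) := by
    intro t ht
    have hset : {ω | (N : ℝ) * a ≤ (N : ℝ) * X ω} = {ω | a ≤ X ω} := by
      ext ω
      simp only [Set.mem_setOf_eq]
      exact mul_le_mul_iff_right₀ (by positivity : (0:ℝ) < (N:ℝ))
    have hcher := ProbabilityTheory.measure_ge_le_exp_mul_mgf (μ := μ)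
      (X := fun ω => (N : ℝ) * X ω) ((N : ℝ) * a) ht (hint t)
    rw [hset] at hcher
    refine hcher.trans ?_
    have := hmgf t ht
    calc Real.exp (-t * ((N:ℝ) * a)) * ProbabilityTheory.mgf (fun ω => (N : ℝ) * X ω) μ t
        ≤ Real.exp (-t * ((N:ℝ) * a)) * 1 :=
          mul_le_mul_of_nonneg_left this (Real.exp_nonneg _)
      _ = Real.exp (-t * ((N:ℝ) * a)) := mul_one _
  have hlim : Filter.Tendsto (fun t : ℝ => Real.exp (-t * ((N:ℝ) * a)))
      Filter.atTop (nhds 0) := by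
    have hmul : Filter.Tendsto (fun t : ℝ => t * ((N:ℝ) * a)) Filter.atTop Filter.atTop :=
      Filter.Tendsto.atTop_mul_const (by positivity) Filter.tendsto_id
    have h2 : Filter.Tendsto (fun t : ℝ => -(t * ((N:ℝ) * a))) Filter.atTop Filter.atBot :=
      Filter.tendsto_neg_atTop_atBot.comp hmul
    simpa [neg_mul] using hmul
  have h0' : (μ {ω | a ≤ X ω}).toReal ≤ 0 :=
    ge_of_tendsto hlim (Filter.eventually_atTop.2 ⟨0, fun t ht => hbd t ht⟩)
  have := le_antisymm h0' ENNReal.toReal_nonneg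
  rwa [ENNReal.toReal_eq_zero_iff, or_iff_left (measure_ne_top μ _)] at this

end MTCB3

namespace MTCB4
open MTCB

lemma exp_le_affine {x t : ℝ} (h0 : 0 ≤ x) (h1 : x ≤ 1) :
    Real.exp (t * x) ≤ 1 - x + x * Real.exp t := by
  have hcvx := convexOn_exp.2 (Set.mem_univ (0:ℝ)) (Set.mem_univ t)
    (by linarith : (0:ℝ) ≤ 1 - x) h0 (by ring)
  simpa [mul_comm] using hcvx

lemma mgf_prod_bound (n m : ℕ) (hn : 0 < n) (hm : 0 < m)
    (Z : Fin n → Type*) [∀ i, MeasurableSpace (Z i)]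
    (p : ∀ i, Measure (Z i)) [∀ i, IsProbabilityMeasure (p i)]
    (L : ∀ i, Z i → ℝ) (hLm : ∀ i, Measurable (L i))
    (hL0 : ∀ i z, 0 ≤ L i z) (hL1 : ∀ i z, L i z ≤ 1)
    (t : ℝ) (ht : 0 ≤ t) :
    ∫ ω, Real.exp (t * ∑ i, ∑ j, L i (ω i j))
        ∂(Measure.pi fun i => Measure.pi fun _ : Fin m => p i)
      ≤ (1 - ((1/(n:ℝ)) * ∑ i, ∫ z, L i z ∂p i)
          + ((1/(n:ℝ)) * ∑ i, ∫ z, L i z ∂p i) * Real.exp t) ^ (m * n) := by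
  letI : ∀ i, MeasureSpace (Z i) := fun i => ⟨p i⟩
  set μi : Fin n → ℝ := fun i => ∫ z, L i z ∂p i with hμi
  have hμi0 : ∀ i, 0 ≤ μi i := fun i => integral_nonneg (hL0 i)
  have hintL : ∀ i, Integrable (L i) (p i) := by
    intro i
    refine Integrable.mono' (integrable_const (1:ℝ)) (hLm i).aestronglyMeasurable ?_
    exact ae_of_all _ fun z => by rw [Real.norm_eq_abs, abs_of_nonneg (hL0 i z)]; exact hL1 i z
  have hμi1 : ∀ i, μi i ≤ 1 := by
    intro i
    calc μi i ≤ ∫ _, (1:ℝ) ∂p i := integral_mono (hintL i) (integrable_const 1) (hL1 i)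
      _ = 1 := by simp
  set a : Fin n → ℝ := fun i => 1 - μi i + μi i * Real.exp t with haa
  have ha0 : ∀ i, 0 ≤ a i := fun i => by
    have h1 := hμi0 i; have h2 := hμi1 i
    have h3 := mul_nonneg (hμi0 i) (Real.exp_nonneg t)
    simp only [haa]
    linarith
  set pb : ℝ := (1/(n:ℝ)) * ∑ i, μi i with hpb
  set S : ℝ := 1 - pb + pb * Real.exp t with hS
  have hn' : (0:ℝ) < (n:ℝ) := by positivity
  have hpb0 : 0 ≤ pb := mul_nonneg (by positivity) (Finset.sum_nonneg fun i _ => hμi0 i)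
  have hpb1 : pb ≤ 1 := by
    have hsum : ∑ i, μi i ≤ (n:ℝ) := by
      calc ∑ i, μi i ≤ ∑ _i : Fin n, (1:ℝ) := Finset.sum_le_sum fun i _ => hμi1 i
        _ = n := by simp
    calc pb ≤ (1/(n:ℝ)) * (n:ℝ) :=
          mul_le_mul_of_nonneg_left hsum (by positivity)
      _ = 1 := by field_simp
  have hS0 : 0 ≤ S := by
    have := mul_nonneg hpb0 (Real.exp_nonneg t)
    simp only [hS]
    linarith
  -- step 1: rewrite integrand as a product and use Fubini
  have hrw : (∫ ω, Real.exp (t * ∑ i, ∑ j, L i (ω i j))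
        ∂(Measure.pi fun i => Measure.pi fun _ : Fin m => p i))
      = ∏ i, (∫ z, Real.exp (t * L i z) ∂p i) ^ m := by
    have hfun : ∀ ω : (i : Fin n) → (Fin m → Z i),
        Real.exp (t * ∑ i, ∑ j, L i (ω i j))
          = ∏ i, ∏ j, Real.exp (t * L i (ω i j)) := by
      intro ω
      rw [Finset.mul_sum, Real.exp_sum]
      refine Finset.prod_congr rfl fun i _ => ?_
      rw [Finset.mul_sum, Real.exp_sum]
    simp_rw [hfun]
    have h1 : (∫ ω, ∏ i, (fun (i : Fin n) (v : Fin m → Z i) =>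
          ∏ j, Real.exp (t * L i (v j))) i (ω i)
            ∂(Measure.pi fun i => Measure.pi fun _ : Fin m => p i))
        = ∏ i, ∫ v : Fin m → Z i, ∏ j, Real.exp (t * L i (v j))
            ∂(Measure.pi fun _ : Fin m => p i) := by
      exact MeasureTheory.integral_fintype_prod_eq_prod
        (fun i (v : Fin m → Z i) => ∏ j, Real.exp (t * L i (v j)))
    rw [h1]
    refine Finset.prod_congr rfl fun i _ => ?_
    have h2 : (∫ v : Fin m → Z i, ∏ j, Real.exp (t * L i (v j))
          ∂(Measure.pi fun _ : Fin m => p i))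
        = (∫ z, Real.exp (t * L i z) ∂p i) ^ (Fintype.card (Fin m)) :=
      MeasureTheory.integral_fintype_prod_eq_pow (fun z => Real.exp (t * L i z))
    rw [h2, Fintype.card_fin]
  rw [hrw]
  -- step 2: per-task bound
  have hper : ∀ i, (∫ z, Real.exp (t * L i z) ∂p i) ≤ a i := by
    intro i
    have hintexp : Integrable (fun z => Real.exp (t * L i z)) (p i) :=
      integrable_exp_bdd (p i) zero_le_one (hLm i) (hL0 i) (hL1 i) t
    have hintaff : Integrable (fun z => 1 - L i z + L i z * Real.exp t) (p i) :=
      (((integrable_const (1:ℝ)).sub (hintL i)).add ((hintL i).mul_const _))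
    calc (∫ z, Real.exp (t * L i z) ∂p i)
        ≤ ∫ z, (1 - L i z + L i z * Real.exp t) ∂p i :=
          integral_mono hintexp hintaff fun z => exp_le_affine (hL0 i z) (hL1 i z)
      _ = a i := by
          have e1 : ∫ z, (1 - L i z + L i z * Real.exp t) ∂p i
              = (∫ z, (1 - L i z) ∂p i) + ∫ z, L i z * Real.exp t ∂p i :=
            integral_add ((integrable_const (1:ℝ)).sub (hintL i)) ((hintL i).mul_const _)
          have e2 : ∫ z, (1 - L i z) ∂p i = (∫ _z, (1:ℝ) ∂p i) - ∫ z, L i z ∂p i :=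
            integral_sub (integrable_const (1:ℝ)) (hintL i)
          rw [e1, e2, integral_mul_const, integral_const]
          simp [haa, hμi]
  have hper0 : ∀ i, 0 ≤ (∫ z, Real.exp (t * L i z) ∂p i) :=
    fun i => integral_nonneg fun z => Real.exp_nonneg _
  -- step 3: AM-GM
  have hamgm : ∏ i, a i ≤ S ^ n := by
    have hgm := Real.geom_mean_le_arith_mean_weighted Finset.univ
      (fun _ => 1/(n:ℝ)) a (fun i _ => by positivity)
      (by rw [Finset.sum_const, Finset.card_univ, Fintype.card_fin, nsmul_eq_mul]; field_simp)
      (fun i _ => ha0 i)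
    have hsum : ∑ i, (1/(n:ℝ)) * a i = S := by
      simp only [haa, hS, hpb]
      rw [← Finset.mul_sum, Finset.sum_add_distrib, Finset.sum_sub_distrib, Finset.sum_const,
        ← Finset.sum_mul, Finset.card_univ, Fintype.card_fin]
      field_simp
      rw [nsmul_eq_mul, mul_one]
    rw [hsum] at hgm
    have hprod : ∏ i, a i = (∏ i, a i ^ ((1:ℝ)/(n:ℝ))) ^ n := by
      rw [← Finset.prod_pow]
      refine (Finset.prod_congr rfl fun i _ => ?_).symm
      rw [← Real.rpow_natCast (a i ^ ((1:ℝ)/(n:ℝ))) n, ← Real.rpow_mul (ha0 i)]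
      rw [one_div, inv_mul_cancel₀ hn'.ne', Real.rpow_one]
    rw [hprod]
    exact pow_le_pow_left₀ (Finset.prod_nonneg fun i _ => Real.rpow_nonneg (ha0 i) _) hgm n
  calc ∏ i, (∫ z, Real.exp (t * L i z) ∂p i) ^ m
      ≤ ∏ i, (a i) ^ m :=
        Finset.prod_le_prod (fun i _ => pow_nonneg (hper0 i) m)
          (fun i _ => pow_le_pow_left₀ (hper0 i) (hper i) m)
    _ = (∏ i, a i) ^ m := Finset.prod_pow _ _ _
    _ ≤ (S ^ n) ^ m := pow_le_pow_left₀ (Finset.prod_nonneg fun i _ => ha0 i) hamgm m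
    _ = S ^ (m * n) := by rw [← pow_mul, mul_comm]

end MTCB4

namespace MTCB5
open MTCB MTCB2 MTCB3 MTCB4

lemma bernKL_eq_klF {q P : ℝ} (hP0 : 0 < P) (hP1 : P < 1) :
    bernKL q P = ((klF P q : ℝ) : EReal) := by
  rw [bernKL, if_neg]
  · rfl
  · rintro (⟨_, h⟩ | ⟨_, h⟩) <;> simp_all <;> linarith

lemma bernKL_zero_zero : bernKL 0 0 = (0 : EReal) := by
  rw [bernKL, if_neg] <;> simp

lemma bernKL_one_one : bernKL 1 1 = (0 : EReal) := by
  rw [bernKL, if_neg] <;> simp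

lemma bernKL_pos_zero {q : ℝ} (h : 0 < q) : bernKL q 0 = ⊤ := by
  rw [bernKL, if_pos]; left; exact ⟨h, rfl⟩

lemma bernKL_lt_one_one {q : ℝ} (h : q < 1) : bernKL q 1 = ⊤ := by
  rw [bernKL, if_pos]; right; exact ⟨h, rfl⟩

lemma single_bound (n m : ℕ) (hn : 0 < n) (hm : 0 < m)
    (Z : Fin n → Type*) [∀ i, MeasurableSpace (Z i)]
    (p : ∀ i, Measure (Z i)) [∀ i, IsProbabilityMeasure (p i)]
    (L : ∀ i, Z i → ℝ) (hLm : ∀ i, Measurable (L i))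
    (hL0 : ∀ i z, 0 ≤ L i z) (hL1 : ∀ i z, L i z ≤ 1) (c : ℝ) :
    (Measure.pi fun i => Measure.pi fun _ : Fin m => p i)
      {ω | (c : EReal) < bernKL ((1 / ((m:ℝ) * (n:ℝ))) * ∑ i, ∑ j, L i (ω i j))
          ((1 / (n:ℝ)) * ∑ i, ∫ z, L i z ∂p i)}
    ≤ ENNReal.ofReal (2 * Real.exp (-(((m*n : ℕ):ℝ) * c))) := by
  set μP := (Measure.pi fun i => Measure.pi fun _ : Fin m => p i) with hμP
  have hmn : (0:ℝ) < (m:ℝ) * (n:ℝ) := by positivity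
  set q : ((i : Fin n) → Fin m → Z i) → ℝ :=
    fun ω => (1 / ((m:ℝ) * (n:ℝ))) * ∑ i, ∑ j, L i (ω i j) with hq
  set pb : ℝ := (1 / (n:ℝ)) * ∑ i, ∫ z, L i z ∂p i with hpb
  set N : ℕ := m * n with hN
  have hNpos : 0 < N := Nat.mul_pos hm hn
  have hNcast : ((N:ℕ):ℝ) = (m:ℝ) * (n:ℝ) := by push_cast [hN]; ring
  suffices h : μP {ω | (c : EReal) < bernKL (q ω) pb}
      ≤ ENNReal.ofReal (2 * Real.exp (-(((N:ℕ):ℝ) * c))) by exact h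
  -- trivial case c < 0
  rcases lt_or_ge c 0 with hc | hc
  · calc μP _ ≤ μP Set.univ := measure_mono (Set.subset_univ _)
      _ = 1 := measure_univ
      _ ≤ ENNReal.ofReal (2 * Real.exp (-(((N:ℕ):ℝ) * c))) := by
          rw [show (1 : ENNReal) = ENNReal.ofReal 1 by simp]
          refine ENNReal.ofReal_le_ofReal ?_
          have : (1:ℝ) ≤ Real.exp (-(((N:ℕ):ℝ) * c)) := by
            rw [Real.one_le_exp_iff]
            have : (0:ℝ) < ((N:ℕ):ℝ) := by positivity
            nlinarith
          linarith
  -- basic facts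
  have hSum0 : ∀ ω : (i : Fin n) → Fin m → Z i, 0 ≤ ∑ i, ∑ j, L i (ω i j) := fun ω =>
    Finset.sum_nonneg fun i _ => Finset.sum_nonneg fun j _ => hL0 i _
  have hSum1 : ∀ ω : (i : Fin n) → Fin m → Z i, ∑ i, ∑ j, L i (ω i j) ≤ (m:ℝ) * (n:ℝ) := by
    intro ω
    calc ∑ i, ∑ j, L i (ω i j) ≤ ∑ _i : Fin n, ∑ _j : Fin m, (1:ℝ) :=
          Finset.sum_le_sum fun i _ => Finset.sum_le_sum fun j _ => hL1 i _
      _ = (m:ℝ) * (n:ℝ) := by simp [mul_comm]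
  have hq0 : ∀ ω, 0 ≤ q ω := fun ω => mul_nonneg (by positivity) (hSum0 ω)
  have hq1 : ∀ ω, q ω ≤ 1 := by
    intro ω
    rw [hq]
    calc (1 / ((m:ℝ) * (n:ℝ))) * ∑ i, ∑ j, L i (ω i j)
        ≤ (1 / ((m:ℝ) * (n:ℝ))) * ((m:ℝ) * (n:ℝ)) :=
          mul_le_mul_of_nonneg_left (hSum1 ω) (by positivity)
      _ = 1 := by field_simp
  have hqm : Measurable q := by
    refine Measurable.const_mul ?_ _
    refine Finset.measurable_sum _ fun i _ => ?_
    refine Finset.measurable_sum _ fun j _ => ?_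
    exact (hLm i).comp ((measurable_pi_apply j).comp (measurable_pi_apply i))
  have hintL : ∀ i, Integrable (L i) (p i) := by
    intro i
    refine Integrable.mono' (integrable_const (1:ℝ)) (hLm i).aestronglyMeasurable ?_
    exact ae_of_all _ fun z => by rw [Real.norm_eq_abs, abs_of_nonneg (hL0 i z)]; exact hL1 i z
  have hμi0 : ∀ i, 0 ≤ ∫ z, L i z ∂p i := fun i => integral_nonneg (hL0 i)
  have hμi1 : ∀ i, ∫ z, L i z ∂p i ≤ 1 := by
    intro i
    calc ∫ z, L i z ∂p i ≤ ∫ _, (1:ℝ) ∂p i := integral_mono (hintL i) (integrable_const 1) (hL1 i)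
      _ = 1 := by simp
  have hpb0 : 0 ≤ pb := mul_nonneg (by positivity) (Finset.sum_nonneg fun i _ => hμi0 i)
  have hpb1 : pb ≤ 1 := by
    rw [hpb]
    have hs : ∑ i, ∫ z, L i z ∂p i ≤ (n:ℝ) := by
      calc ∑ i, ∫ z, L i z ∂p i ≤ ∑ _i : Fin n, (1:ℝ) := Finset.sum_le_sum fun i _ => hμi1 i
        _ = n := by simp
    calc (1 / (n:ℝ)) * ∑ i, ∫ z, L i z ∂p i ≤ (1 / (n:ℝ)) * (n:ℝ) :=
          mul_le_mul_of_nonneg_left hs (by positivity)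
      _ = 1 := by field_simp
  -- the two mgf bounds
  have hmgf1 : ∀ t : ℝ, 0 ≤ t →
      ∫ ω, Real.exp (t * ((N:ℝ) * q ω)) ∂μP ≤ (1 - pb + pb * Real.exp t) ^ N := by
    intro t ht
    have hNq : ∀ ω, ((N:ℕ):ℝ) * q ω = ∑ i, ∑ j, L i (ω i j) := by
      intro ω
      rw [hq, hNcast]
      field_simp
    simp_rw [hNq]
    exact mgf_prod_bound n m hn hm Z p L hLm hL0 hL1 t ht
  have hmgf2 : ∀ t : ℝ, 0 ≤ t →
      ∫ ω, Real.exp (t * ((N:ℝ) * (1 - q ω))) ∂μP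
        ≤ (1 - (1 - pb) + (1 - pb) * Real.exp t) ^ N := by
    intro t ht
    have hNq : ∀ ω, ((N:ℕ):ℝ) * (1 - q ω) = ∑ i, ∑ j, (1 - L i (ω i j)) := by
      intro ω
      have h1 : ∀ i : Fin n, ∑ j, (1 - L i (ω i j)) = (m:ℝ) - ∑ j, L i (ω i j) := by
        intro i
        rw [Finset.sum_sub_distrib, Finset.sum_const, Finset.card_univ, Fintype.card_fin,
          nsmul_eq_mul, mul_one]
      simp_rw [h1]
      rw [Finset.sum_sub_distrib, Finset.sum_const, Finset.card_univ, Fintype.card_fin,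
        nsmul_eq_mul]
      rw [hq, hNcast]
      field_simp
    simp_rw [hNq]
    have hInt1 : ∀ i, ∫ z, (1 - L i z) ∂p i = 1 - ∫ z, L i z ∂p i := by
      intro i
      rw [integral_sub (integrable_const (1:ℝ)) (hintL i), integral_const]
      simp
    have hpb' : (1 / (n:ℝ)) * ∑ i, ∫ z, (1 - L i z) ∂p i = 1 - pb := by
      simp_rw [hInt1]
      rw [Finset.sum_sub_distrib, Finset.sum_const, Finset.card_univ, Fintype.card_fin,
        nsmul_eq_mul, mul_one, hpb]
      have : (n:ℝ) ≠ 0 := by positivity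
      field_simp
    have := mgf_prod_bound n m hn hm Z p (fun i z => 1 - L i z)
      (fun i => (measurable_const.sub (hLm i)))
      (fun i z => sub_nonneg.2 (hL1 i z)) (fun i z => sub_le_self 1 (hL0 i z)) t ht
    rwa [hpb'] at this
  -- case pb = 0
  rcases eq_or_lt_of_le hpb0 with hpbz | hpbpos
  · have hsub : {ω | (c : EReal) < bernKL (q ω) pb} ⊆ {ω | 0 < q ω} := by
      intro ω hω
      simp only [Set.mem_setOf_eq] at hω ⊢
      rcases eq_or_lt_of_le (hq0 ω) with h | h
      · exfalso
        rw [← hpbz, ← h, bernKL_zero_zero] at hω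
        have : (c:EReal) < (0:EReal) := hω
        have : c < 0 := by exact_mod_cast this
        linarith
      · exact h
    have hzero : μP {ω | 0 < q ω} = 0 := by
      refine degenerate_tail μP hqm hq0 hq1 hNpos fun t ht => ?_
      have := hmgf1 t ht
      rw [← hpbz] at this
      simpa using this
    calc μP _ ≤ μP {ω | 0 < q ω} := measure_mono hsub
      _ = 0 := hzero
      _ ≤ _ := zero_le
  -- case pb = 1
  rcases eq_or_lt_of_le hpb1 with hpbo | hpblt
  · have hsub : {ω | (c : EReal) < bernKL (q ω) pb} ⊆ {ω | 0 < 1 - q ω} := by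
      intro ω hω
      simp only [Set.mem_setOf_eq] at hω ⊢
      rcases eq_or_lt_of_le (hq1 ω) with h | h
      · exfalso
        rw [hpbo, h, bernKL_one_one] at hω
        have : c < 0 := by exact_mod_cast hω
        linarith
      · linarith
    have hzero : μP {ω | 0 < 1 - q ω} = 0 := by
      refine degenerate_tail μP (X := fun ω => 1 - q ω)
        (measurable_const.sub hqm) (fun ω => ?_) (fun ω => ?_) hNpos (fun t ht => ?_)
      · show (0:ℝ) ≤ 1 - q ω; linarith [hq1 ω]
      · show (1:ℝ) - q ω ≤ 1; linarith [hq0 ω]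
      · have := hmgf2 t ht
        rw [hpbo] at this
        simpa using this
    calc μP _ ≤ μP {ω | 0 < 1 - q ω} := measure_mono hsub
      _ = 0 := hzero
      _ ≤ _ := zero_le
  -- main case 0 < pb < 1
  have hkl : ∀ ω, bernKL (q ω) pb = ((klF pb (q ω) : ℝ) : EReal) := fun ω =>
    bernKL_eq_klF hpbpos hpblt
  have hsub : {ω | (c:EReal) < bernKL (q ω) pb} ⊆
      {ω | pb < q ω ∧ c < klF pb (q ω)}
        ∪ {ω | 1 - pb < 1 - q ω ∧ c < klF (1-pb) (1 - q ω)} := by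
    intro ω hω
    simp only [Set.mem_setOf_eq] at hω
    simp only [Set.mem_union, Set.mem_setOf_eq]
    rw [hkl ω] at hω
    have hc' : c < klF pb (q ω) := by exact_mod_cast hω
    rcases lt_trichotomy (q ω) pb with h | h | h
    · right
      refine ⟨by linarith, ?_⟩
      rwa [← klF_symm]
    · exfalso
      rw [h, klF_self hpbpos hpblt] at hc'
      linarith
    · left; exact ⟨h, hc'⟩
  have h1 := upper_tail μP hqm hq0 hq1 hNpos hpbpos hpblt hmgf1 hc
  have h2 := upper_tail μP (X := fun ω => 1 - q ω) (measurable_const.sub hqm)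
    (fun ω => by show (0:ℝ) ≤ 1 - q ω; linarith [hq1 ω])
    (fun ω => by show (1:ℝ) - q ω ≤ 1; linarith [hq0 ω])
    hNpos (by linarith : (0:ℝ) < 1 - pb) (by linarith : 1 - pb < 1) hmgf2 hc
  refine (measure_mono hsub).trans ?_
  refine (measure_union_le _ _).trans ?_
  refine (add_le_add h1 h2).trans ?_
  rw [← ENNReal.ofReal_add (Real.exp_nonneg _) (Real.exp_nonneg _), ← two_mul]

end MTCB5

open MTCB MTCB2 MTCB3 MTCB4 MTCB5

/-- **Multi-task compression bound (fast rate).**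
With probability at least `1 - δ` over the i.i.d. sampling of `m` examples per task
for each of the `n` tasks, simultaneously for every global parameter `E` and every
tuple of hypotheses `f₁, …, fₙ`:
`kl(R̂(f₁,…,fₙ) | R(f₁,…,fₙ)) ≤ ((l(E) + l_E(f₁,…,fₙ))·log 2 + log(2√(mn)/δ))/(mn)`. -/
theorem multitask_compression_bound_fast_rate
    (n m : ℕ) (hn : 0 < n) (hm : 0 < m)
    (Z : Fin n → Type*) [∀ i, MeasurableSpace (Z i)]
    (p : ∀ i, Measure (Z i)) [∀ i, IsProbabilityMeasure (p i)]
    (F : Type*) (ℓ : ∀ i : Fin n, F → Z i → ℝ)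
    (hmeas : ∀ i f, Measurable (ℓ i f))
    (hrange : ∀ i f z, ℓ i f z ∈ Set.Icc (0 : ℝ) 1)
    (𝓔 : Type*) (encE : 𝓔 → List Bool) (hencE : PrefixFreeCode encE)
    (encF : 𝓔 → (Fin n → F) → List Bool) (hencF : ∀ E, PrefixFreeCode (encF E))
    (δ : ℝ) (hδ : 0 < δ) :
    1 - ENNReal.ofReal δ ≤
      (Measure.pi fun i => Measure.pi fun _ : Fin m => p i)
        {ω | ∀ (E : 𝓔) (fs : Fin n → F),
          bernKL ((1 / (m * n) : ℝ) * ∑ i, ∑ j, ℓ i (fs i) (ω i j))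
              ((1 / n : ℝ) * ∑ i, ∫ z, ℓ i (fs i) z ∂p i) ≤
            (((((encE E).length + (encF E fs).length : ℝ) * Real.log 2 +
                Real.log (2 * Real.sqrt (m * n) / δ)) / (m * n) : ℝ) : EReal)} := by
  classical
  set μP := (Measure.pi fun i => Measure.pi fun _ : Fin m => p i) with hμP
  set cst : 𝓔 → (Fin n → F) → ℝ := fun E fs =>
    ((((encE E).length + (encF E fs).length : ℝ) * Real.log 2 +
      Real.log (2 * Real.sqrt ((m:ℝ) * (n:ℝ)) / δ)) / ((m:ℝ) * (n:ℝ))) with hcst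
  set G := {ω : (i : Fin n) → Fin m → Z i | ∀ (E : 𝓔) (fs : Fin n → F),
      bernKL ((1 / ((m:ℝ) * (n:ℝ))) * ∑ i, ∑ j, ℓ i (fs i) (ω i j))
        ((1 / (n:ℝ)) * ∑ i, ∫ z, ℓ i (fs i) z ∂p i) ≤ ((cst E fs : ℝ) : EReal)} with hG
  show 1 - ENNReal.ofReal δ ≤ μP G
  rw [tsub_le_iff_right]
  rcases isEmpty_or_nonempty 𝓔 with hE | hne
  · have hGu : G = Set.univ := by
      ext ω; simp only [hG, Set.mem_setOf_eq, Set.mem_univ, iff_true]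
      intro E; exact isEmptyElim E
    rw [hGu, measure_univ]
    exact le_self_add
  obtain ⟨E₀⟩ := hne
  haveI : Countable 𝓔 := hencE.1.countable
  haveI : Countable (Fin n → F) := (hencF E₀).1.countable
  set Bad : 𝓔 → (Fin n → F) → Set ((i : Fin n) → Fin m → Z i) := fun E fs =>
    {ω | ((cst E fs : ℝ) : EReal) < bernKL ((1 / ((m:ℝ) * (n:ℝ))) * ∑ i, ∑ j, ℓ i (fs i) (ω i j))
        ((1 / (n:ℝ)) * ∑ i, ∫ z, ℓ i (fs i) z ∂p i)} with hBad
  have hcover : (Set.univ : Set ((i : Fin n) → Fin m → Z i)) ⊆ G ∪ ⋃ E, ⋃ fs, Bad E fs := by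
    intro ω _
    by_cases hw : ω ∈ G
    · exact Or.inl hw
    · right
      simp only [hG, Set.mem_setOf_eq, not_forall] at hw
      obtain ⟨E, fs, hEfs⟩ := hw
      exact Set.mem_iUnion.2 ⟨E, Set.mem_iUnion.2 ⟨fs, not_le.1 hEfs⟩⟩
  -- bound on each bad event
  have hsqrt1 : 1 ≤ Real.sqrt ((m:ℝ) * (n:ℝ)) := by
    rw [show (1:ℝ) = Real.sqrt 1 by simp]
    refine Real.sqrt_le_sqrt ?_
    have hm' : (1:ℝ) ≤ (m:ℝ) := by exact_mod_cast hm
    have hn' : (1:ℝ) ≤ (n:ℝ) := by exact_mod_cast hn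
    nlinarith
  have hsqrtpos : 0 < Real.sqrt ((m:ℝ) * (n:ℝ)) := lt_of_lt_of_le one_pos hsqrt1
  have hone : ∀ (E : 𝓔) (fs : Fin n → F),
      μP (Bad E fs) ≤ ENNReal.ofReal δ * ENNReal.ofReal ((1/2:ℝ) ^ (encE E).length)
        * ENNReal.ofReal ((1/2:ℝ) ^ (encF E fs).length) := by
    intro E fs
    have hb := single_bound n m hn hm Z p (fun i => ℓ i (fs i))
      (fun i => hmeas i (fs i)) (fun i z => (hrange i (fs i) z).1)
      (fun i z => (hrange i (fs i) z).2) (cst E fs)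
    refine hb.trans ?_
    -- compute the exponential
    set kE := (encE E).length with hkE
    set kF := (encF E fs).length with hkF
    have hmn : ((m*n : ℕ):ℝ) = (m:ℝ) * (n:ℝ) := by push_cast; ring
    have hmn0 : ((m:ℝ) * (n:ℝ)) ≠ 0 := by positivity
    have hNc : ((m*n : ℕ):ℝ) * cst E fs
        = ((kE + kF : ℕ):ℝ) * Real.log 2 + Real.log (2 * Real.sqrt ((m:ℝ)*(n:ℝ)) / δ) := by
      rw [hmn, hcst]
      push_cast
      field_simp
      rw [hkE, hkF]; ring
    have hexp : 2 * Real.exp (-(((m*n : ℕ):ℝ) * cst E fs))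
        = δ * ((1/2:ℝ) ^ (kE + kF)) / Real.sqrt ((m:ℝ)*(n:ℝ)) := by
      rw [hNc, neg_add, Real.exp_add]
      have e1 : Real.exp (-(((kE + kF : ℕ):ℝ) * Real.log 2)) = (1/2:ℝ) ^ (kE + kF) := by
        rw [Real.exp_neg, Real.exp_nat_mul, Real.exp_log two_pos, one_div, inv_pow]
      have e2 : Real.exp (-Real.log (2 * Real.sqrt ((m:ℝ)*(n:ℝ)) / δ))
          = δ / (2 * Real.sqrt ((m:ℝ)*(n:ℝ))) := by
        rw [Real.exp_neg, Real.exp_log (by positivity)]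
        rw [inv_div]
      rw [e1, e2]
      field_simp
    rw [hexp]
    have hle : δ * ((1/2:ℝ) ^ (kE + kF)) / Real.sqrt ((m:ℝ)*(n:ℝ))
        ≤ δ * ((1/2:ℝ) ^ kE) * ((1/2:ℝ) ^ kF) := by
      rw [pow_add]
      calc δ * ((1/2:ℝ) ^ kE * (1/2:ℝ) ^ kF) / Real.sqrt ((m:ℝ)*(n:ℝ))
          ≤ δ * ((1/2:ℝ) ^ kE * (1/2:ℝ) ^ kF) / 1 := by
            refine div_le_div_of_nonneg_left ?_ one_pos hsqrt1
            positivity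
        _ = δ * ((1/2:ℝ) ^ kE) * ((1/2:ℝ) ^ kF) := by ring
    refine (ENNReal.ofReal_le_ofReal hle).trans ?_
    rw [ENNReal.ofReal_mul (by positivity), ENNReal.ofReal_mul (by positivity)]
  -- union bound
  have hbad : μP (⋃ E, ⋃ fs, Bad E fs) ≤ ENNReal.ofReal δ := by
    refine (measure_iUnion_le _).trans ?_
    have hstep : ∀ E : 𝓔, μP (⋃ fs, Bad E fs)
        ≤ ENNReal.ofReal δ * ENNReal.ofReal ((1/2:ℝ) ^ (encE E).length) := by
      intro E
      refine (measure_iUnion_le _).trans ?_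
      calc ∑' fs, μP (Bad E fs)
          ≤ ∑' fs : Fin n → F, ENNReal.ofReal δ * ENNReal.ofReal ((1/2:ℝ) ^ (encE E).length)
            * ENNReal.ofReal ((1/2:ℝ) ^ (encF E fs).length) :=
            ENNReal.tsum_le_tsum fun fs => hone E fs
        _ = (ENNReal.ofReal δ * ENNReal.ofReal ((1/2:ℝ) ^ (encE E).length))
            * ∑' fs : Fin n → F, ENNReal.ofReal ((1/2:ℝ) ^ (encF E fs).length) :=
            ENNReal.tsum_mul_left
        _ ≤ (ENNReal.ofReal δ * ENNReal.ofReal ((1/2:ℝ) ^ (encE E).length)) * 1 :=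
            mul_le_mul_right (kraft (encF E) (hencF E)) _
        _ = ENNReal.ofReal δ * ENNReal.ofReal ((1/2:ℝ) ^ (encE E).length) := mul_one _
    calc ∑' E, μP (⋃ fs, Bad E fs)
        ≤ ∑' E : 𝓔, ENNReal.ofReal δ * ENNReal.ofReal ((1/2:ℝ) ^ (encE E).length) :=
          ENNReal.tsum_le_tsum hstep
      _ = ENNReal.ofReal δ * ∑' E : 𝓔, ENNReal.ofReal ((1/2:ℝ) ^ (encE E).length) :=
          ENNReal.tsum_mul_left
      _ ≤ ENNReal.ofReal δ * 1 := mul_le_mul_right (kraft encE hencE) _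
      _ = ENNReal.ofReal δ := mul_one _
  calc (1 : ENNReal) = μP Set.univ := measure_univ.symm
    _ ≤ μP (G ∪ ⋃ E, ⋃ fs, Bad E fs) := measure_mono hcover
    _ ≤ μP G + μP (⋃ E, ⋃ fs, Bad E fs) := measure_union_le _ _
    _ ≤ μP G + ENNReal.ofReal δ := add_le_add_right hbad _
end MTCBaux
end

section
/- Let n, m be positive integers. For each task i ∈ {1,…,n}, let Z_i be a measurable space, p_i a probability measure on Z_i, and for a hypothesis set F let ℓ_i : F × Z_i → [0,1] be a loss function, measurable in its second argument for each fixed hypothesis. Let the training data consist of n independent samples S_i = (z_{i,1},…,z_{i,m}), where each S_i is drawn i.i.d. from p_i. Let 𝓔 be a countable set of global parameters with a length function l : 𝓔 → ℕ arising from a prefix-free encoding of 𝓔, and for each E ∈ 𝓔 let l_E : ⋃_{n≥1} F^n → ℕ be a length function arising from a prefix-free encoding of tuples of hypotheses. Then for any δ > 0, with probability at least 1 − δ over the sampling of the training data, simultaneously for all E ∈ 𝓔 and all f_1,…,f_n ∈ F the following inequality holds: R(f_1,…,f_n) ≤ R̂(f_1,…,f_n) + sqrt( ((l(E) + l_E(f_1,…,f_n))·log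 2 + log(2·sqrt(mn)/δ)) / (2mn) ). -/
open MeasureTheory
open scoped ENNReal
open Real ProbabilityTheory

lemma kraft_finset {α : Type*} (c : α → List Bool) (hc : PrefixFreeCode c) (s : Finset α) :
    ∑ a ∈ s, ((2:ℝ)⁻¹) ^ (c a).length ≤ 1 := by
  classical
  set N := s.sup (fun a => (c a).length) with hN
  have hle : ∀ a ∈ s, (c a).length ≤ N := fun a ha => Finset.le_sup (f := fun a => (c a).length) ha
  -- the finsets of length-N extensions
  set S : α → Finset (List Bool) :=
    fun a => (Finset.univ : Finset (Fin (N - (c a).length) → Bool)).image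
      (fun v => c a ++ List.ofFn v) with hS
  have hcard : ∀ a, (S a).card = 2 ^ (N - (c a).length) := by
    intro a
    rw [hS, Finset.card_image_of_injective _ (fun v w h => ?_), Finset.card_univ]
    · simp [Fintype.card_fun]
    · have := List.append_cancel_left h
      exact List.ofFn_injective this
  have hlen : ∀ a ∈ s, ∀ x ∈ S a, x.length = N := by
    intro a ha x hx
    simp only [hS, Finset.mem_image] at hx
    obtain ⟨v, -, rfl⟩ := hx
    simp [Nat.add_sub_cancel' (hle a ha)]
  have hpref : ∀ a, ∀ x ∈ S a, c a <+: x := by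
    intro a x hx
    simp only [hS, Finset.mem_image] at hx
    obtain ⟨v, -, rfl⟩ := hx
    exact ⟨List.ofFn v, rfl⟩
  have hdisj : (s : Set α).PairwiseDisjoint S := by
    intro a _ b _ hab
    simp only [Finset.disjoint_left]
    intro x hxa hxb
    rcases List.prefix_or_prefix_of_prefix (hpref a x hxa) (hpref b x hxb) with h | h
    · exact hc.2 a b hab h
    · exact hc.2 b a (Ne.symm hab) h
  have hcount : ∑ a ∈ s, 2 ^ (N - (c a).length) ≤ 2 ^ N := by
    have h1 : ∑ a ∈ s, 2 ^ (N - (c a).length) = (s.biUnion S).card := by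
      rw [Finset.card_biUnion (fun a ha b hb hab => hdisj ha hb hab)]
      exact Finset.sum_congr rfl fun a _ => (hcard a).symm
    rw [h1]
    have h2 : (s.biUnion S).card ≤ (Finset.univ : Finset (Fin N → Bool)).card := by
      apply Finset.card_le_card_of_injOn (fun x (i : Fin N) => x.getD i false)
        (fun x _ => Finset.mem_univ _)
      intro x hx y hy hxy
      simp only [Finset.coe_biUnion, Set.mem_iUnion, Finset.mem_coe] at hx hy
      obtain ⟨a, ha, hxa⟩ := hx
      obtain ⟨b, hb, hyb⟩ := hy
      have hxN : x.length = N := hlen a ha x hxa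
      have hyN : y.length = N := hlen b hb y hyb
      apply List.ext_getElem (by rw [hxN, hyN])
      intro i h1 h2
      have h3 := congrFun hxy ⟨i, by omega⟩
      simp only [] at h3
      rwa [List.getD_eq_getElem x false h1, List.getD_eq_getElem y false h2] at h3
    simpa [Fintype.card_fun] using h2
  -- cast to ℝ
  have hcast : ∑ a ∈ s, ((2:ℝ)) ^ (N - (c a).length) ≤ 2 ^ N := by
    exact_mod_cast hcount
  have key : ∀ a ∈ s, ((2:ℝ)⁻¹) ^ (c a).length = 2 ^ (N - (c a).length) / 2 ^ N := by
    intro a ha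
    rw [inv_pow, eq_div_iff (by positivity : (2:ℝ) ^ N ≠ 0), inv_mul_eq_div,
      div_eq_iff (by positivity : (2:ℝ) ^ (c a).length ≠ 0), ← pow_add]
    congr 1
    have := hle a ha
    omega
  calc ∑ a ∈ s, ((2:ℝ)⁻¹) ^ (c a).length
      = ∑ a ∈ s, (2:ℝ) ^ (N - (c a).length) / 2 ^ N := Finset.sum_congr rfl key
    _ = (∑ a ∈ s, (2:ℝ) ^ (N - (c a).length)) / 2 ^ N := by rw [Finset.sum_div]
    _ ≤ 2 ^ N / 2 ^ N := by apply div_le_div_of_nonneg_right hcast (by positivity) |>.trans_eq rfl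
    _ = 1 := by rw [div_self (by positivity)]

lemma kraft_tsum {α : Type*} (c : α → List Bool) (hc : PrefixFreeCode c) :
    ∑' a, ((2:ℝ≥0∞)⁻¹) ^ (c a).length ≤ 1 := by
  rw [ENNReal.tsum_eq_iSup_sum]
  apply iSup_le
  intro s
  have : ∑ a ∈ s, ((2:ℝ≥0∞)⁻¹) ^ (c a).length
      = ENNReal.ofReal (∑ a ∈ s, ((2:ℝ)⁻¹) ^ (c a).length) := by
    rw [ENNReal.ofReal_sum_of_nonneg (fun a _ => by positivity)]
    apply Finset.sum_congr rfl
    intro a _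
    symm
    rw [ENNReal.ofReal_pow (by norm_num), ENNReal.ofReal_inv_of_pos (by norm_num),
      ENNReal.ofReal_ofNat]
  rw [this]
  calc ENNReal.ofReal (∑ a ∈ s, ((2:ℝ)⁻¹) ^ (c a).length)
      ≤ ENNReal.ofReal 1 := ENNReal.ofReal_le_ofReal (kraft_finset c hc s)
    _ = 1 := ENNReal.ofReal_one


lemma bernoulli_mgf (p : ℝ) (hp : p ∈ Set.Icc (0:ℝ) 1) (u : ℝ) :
    Real.exp (-(u*p)) * ((1-p) + p * Real.exp u) ≤ Real.exp (u^2/8) := by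
  obtain ⟨hp0, hp1⟩ := hp
  rcases eq_or_lt_of_le hp0 with h0 | h0
  · simp only [← h0]
    simpa using Real.one_le_exp (by positivity)
  rcases eq_or_lt_of_le hp1 with h1 | h1
  · subst h1
    simp only [mul_one, sub_self, zero_add, one_mul, ← Real.exp_add, neg_add_cancel,
      Real.exp_zero]
    exact Real.one_le_exp (by positivity)
  -- 0 < p < 1
  set D : ℝ → ℝ := fun u => (1-p) + p * Real.exp u with hD
  have hDpos : ∀ u, 0 < D u := fun u => by
    have : 0 < p * Real.exp u := by positivity
    simp only [hD]; nlinarith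
  set g : ℝ → ℝ := fun u => u^2/8 + u*p - Real.log (D u) with hg
  set g' : ℝ → ℝ := fun u => u/4 + p - p * Real.exp u / D u with hg'
  set g'' : ℝ → ℝ := fun u =>
    1/4 - (p * Real.exp u * D u - p * Real.exp u * (p * Real.exp u)) / (D u)^2 with hg''
  have hDder : ∀ u, HasDerivAt D (p * Real.exp u) u := by
    intro u
    exact ((Real.hasDerivAt_exp u).const_mul p).const_add (1-p)
  have hgder : ∀ u, HasDerivAt g (g' u) u := by
    intro u
    have h1 : HasDerivAt (fun u : ℝ => u^2/8 + u*p) (u/4 + p) u := by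
      have := ((hasDerivAt_pow 2 u).div_const 8).add ((hasDerivAt_id u).mul_const p)
      exact this.congr_deriv (by ring)
    have h2 : HasDerivAt (fun u => Real.log (D u)) (p * Real.exp u / D u) u :=
      (hDder u).log (hDpos u).ne'
    exact h1.sub h2
  have hg'der : ∀ u, HasDerivAt g' (g'' u) u := by
    intro u
    have h1 : HasDerivAt (fun u : ℝ => u/4 + p) (1/4) u := by
      have := ((hasDerivAt_id u).div_const 4).add_const p
      simpa using this.congr_deriv (by norm_num)
    have h2 : HasDerivAt (fun u => p * Real.exp u / D u)
        ((p * Real.exp u * D u - p * Real.exp u * (p * Real.exp u)) / (D u)^2) u :=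
      (((Real.hasDerivAt_exp u).const_mul p)).div (hDder u) (hDpos u).ne'
    exact (h1.sub h2).congr_deriv (by rw [hg''])
  have hg''nonneg : ∀ u, 0 ≤ g'' u := by
    intro u
    simp only [hg'']
    rw [sub_nonneg, div_le_iff₀ (pow_pos (hDpos u) 2)]
    have he : 0 < Real.exp u := Real.exp_pos u
    simp only [hD]
    nlinarith [sq_nonneg ((1-p) - p * Real.exp u)]
  have hgdiff : Differentiable ℝ g := fun u => (hgder u).differentiableAt
  have hg'mono : Monotone g' := by
    apply monotone_of_deriv_nonneg (fun u => (hg'der u).differentiableAt)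
    intro u
    rw [(hg'der u).deriv]
    exact hg''nonneg u
  have hg'0 : g' 0 = 0 := by simp [hg', hD]
  have hg0 : g 0 = 0 := by simp [hg, hD]
  have hgnonneg : ∀ u, 0 ≤ g u := by
    intro u
    rcases le_total 0 u with hu | hu
    · have : MonotoneOn g (Set.Ici 0) := by
        apply monotoneOn_of_deriv_nonneg (convex_Ici 0)
          hgdiff.continuous.continuousOn ?_ ?_
        · intro x _
          exact (hgder x).differentiableAt.differentiableWithinAt
        · intro x hx
          rw [(hgder x).deriv]
          rw [interior_Ici] at hx
          rw [← hg'0]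
          exact hg'mono (le_of_lt hx)
      rw [← hg0]
      exact this (Set.self_mem_Ici) hu hu
    · have : AntitoneOn g (Set.Iic 0) := by
        apply antitoneOn_of_deriv_nonpos (convex_Iic 0)
          hgdiff.continuous.continuousOn ?_ ?_
        · intro x _
          exact (hgder x).differentiableAt.differentiableWithinAt
        · intro x hx
          rw [(hgder x).deriv]
          rw [interior_Iic] at hx
          rw [← hg'0]
          exact hg'mono (le_of_lt hx)
      rw [← hg0]
      exact this hu Set.self_mem_Iic hu
  -- conclude
  have hkey : Real.log (D u) ≤ u^2/8 + u*p := by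
    have := hgnonneg u
    simp only [hg] at this
    linarith
  have hD' : D u ≤ Real.exp (u^2/8 + u*p) := by
    rw [← Real.exp_log (hDpos u)]
    exact Real.exp_le_exp.mpr hkey
  calc Real.exp (-(u*p)) * ((1-p) + p * Real.exp u)
      = Real.exp (-(u*p)) * D u := rfl
    _ ≤ Real.exp (-(u*p)) * Real.exp (u^2/8 + u*p) := by
        apply mul_le_mul_of_nonneg_left hD' (le_of_lt (Real.exp_pos _))
    _ = Real.exp (u^2/8) := by rw [← Real.exp_add]; ring_nf

open MeasureTheory in
lemma integrable_of_bddm {Z : Type*} [MeasurableSpace Z] (μ : Measure Z) [IsFiniteMeasure μ]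
    {f : Z → ℝ} (hf : Measurable f) (C : ℝ) (h : ∀ z, |f z| ≤ C) : Integrable f μ := by
  refine (integrable_const C).mono' hf.aestronglyMeasurable ?_
  exact ae_of_all _ (fun z => by simpa [Real.norm_eq_abs] using h z)

open MeasureTheory in
lemma hoeffding_mgf {Z : Type*} [MeasurableSpace Z] (μ : Measure Z) [IsProbabilityMeasure μ]
    (g : Z → ℝ) (hg : Measurable g) (hr : ∀ z, g z ∈ Set.Icc (0:ℝ) 1) (s : ℝ) :
    ∫ z, Real.exp (s * ((∫ z', g z' ∂μ) - g z)) ∂μ ≤ Real.exp (s^2/8) := by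
  have hgint : Integrable g μ :=
    integrable_of_bddm μ hg 1 (fun z => abs_le.mpr ⟨by linarith [(hr z).1], (hr z).2⟩)
  set p : ℝ := ∫ z', g z' ∂μ with hp
  have hp0 : 0 ≤ p := integral_nonneg (fun z => (hr z).1)
  have hp1 : p ≤ 1 := by
    have := integral_mono hgint (integrable_const 1) (fun z => (hr z).2)
    simpa using this
  have hexp : ∀ z, Real.exp (s * (p - g z)) = Real.exp (s*p) * Real.exp (-(s * g z)) := by
    intro z; rw [← Real.exp_add]; ring_nf
  have hconv : ∀ z, Real.exp (-(s * g z)) ≤ (1 - g z) + g z * Real.exp (-s) := by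
    intro z
    obtain ⟨hy0, hy1⟩ := hr z
    have h := convexOn_exp.2 (Set.mem_univ (0:ℝ)) (Set.mem_univ (-s))
      (show (0:ℝ) ≤ 1 - g z by linarith) hy0 (show (1 - g z) + g z = 1 by ring)
    simp only [smul_eq_mul, mul_zero, zero_add, Real.exp_zero, mul_one] at h
    have harg : g z * (-s) = -(s * g z) := by ring
    rw [harg] at h
    exact h
  have hint1 : Integrable (fun z => Real.exp (-(s * g z))) μ := by
    apply integrable_of_bddm μ (by fun_prop) (Real.exp |s|)
    intro z
    rw [abs_of_pos (Real.exp_pos _)]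
    apply Real.exp_le_exp.mpr
    have := (hr z).1; have := (hr z).2
    rcases abs_cases s with ⟨h1, h2⟩ | ⟨h1, h2⟩ <;> nlinarith
  have hint2 : Integrable (fun z => (1 - g z) + g z * Real.exp (-s)) μ :=
    ((integrable_const 1).sub hgint).add (hgint.mul_const _)
  calc ∫ z, Real.exp (s * (p - g z)) ∂μ
      = Real.exp (s*p) * ∫ z, Real.exp (-(s * g z)) ∂μ := by
        simp_rw [hexp, ← smul_eq_mul (a := Real.exp (s*p))]
        rw [integral_smul, smul_eq_mul]
    _ ≤ Real.exp (s*p) * ((1-p) + p * Real.exp (-s)) := by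
        apply mul_le_mul_of_nonneg_left _ (le_of_lt (Real.exp_pos _))
        calc ∫ z, Real.exp (-(s * g z)) ∂μ
            ≤ ∫ z, ((1 - g z) + g z * Real.exp (-s)) ∂μ :=
              integral_mono hint1 hint2 hconv
          _ = (1-p) + p * Real.exp (-s) := by
              have hia : Integrable (fun z => 1 - g z) μ := (integrable_const 1).sub hgint
              have hib : Integrable (fun z => g z * Real.exp (-s)) μ := hgint.mul_const _
              rw [integral_add hia hib, integral_sub (integrable_const 1) hgint,
                integral_mul_const]
              simp [hp, measure_univ]
    _ ≤ Real.exp (s^2/8) := by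
        have := bernoulli_mgf p ⟨hp0, hp1⟩ (-s)
        simp only [neg_mul, neg_neg, neg_sq] at this
        convert this using 2

lemma integral_pi_prod {ι : Type*} [Fintype ι] {E : ι → Type*} [∀ i, MeasurableSpace (E i)]
    (μ : ∀ i, Measure (E i)) [∀ i, IsProbabilityMeasure (μ i)] (f : ∀ i, E i → ℝ) :
    ∫ x, ∏ i, f i (x i) ∂Measure.pi μ = ∏ i, ∫ x, f i x ∂μ i := by
  letI : ∀ i, MeasureSpace (E i) := fun i => ⟨μ i⟩
  letI : ∀ i, SigmaFinite (volume : Measure (E i)) :=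
    fun i => inferInstanceAs (SigmaFinite (μ i))
  exact MeasureTheory.integral_fintype_prod_eq_prod f


lemma chernoff_pair
    (n m : ℕ) (hn : 0 < n) (hm : 0 < m)
    (Z : Fin n → Type*) [∀ i, MeasurableSpace (Z i)]
    (p : ∀ i, Measure (Z i)) [∀ i, IsProbabilityMeasure (p i)]
    (F : Type*) (ℓ : ∀ i : Fin n, F → Z i → ℝ)
    (hmeas : ∀ i f, Measurable (ℓ i f))
    (hrange : ∀ i f z, ℓ i f z ∈ Set.Icc (0 : ℝ) 1)
    (fs : Fin n → F) (ε : ℝ) (hε : 0 ≤ ε) :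
    (Measure.pi fun i => Measure.pi fun _ : Fin m => p i)
      {ω | ε ≤ (1 / n : ℝ) * ∑ i, ∫ z, ℓ i (fs i) z ∂p i
             - (1 / (m * n) : ℝ) * ∑ i, ∑ j, ℓ i (fs i) (ω i j)}
      ≤ ENNReal.ofReal (Real.exp (-(2 * ((m:ℝ) * n)) * ε^2)) := by
  classical
  set μ' : Measure (∀ i, Fin m → Z i) := Measure.pi fun i => Measure.pi fun _ : Fin m => p i
    with hμ'
  haveI : IsProbabilityMeasure μ' := by rw [hμ']; infer_instance
  set K : ℝ := (m:ℝ) * n with hK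
  have hK0 : 0 < K := by positivity
  have hn0 : ((n:ℝ)) ≠ 0 := by positivity
  set t : ℝ := 4 * K * ε with ht
  have ht0 : 0 ≤ t := by positivity
  set a : Fin n → ℝ := fun i => ∫ z, ℓ i (fs i) z ∂p i with ha
  set X : (∀ i, Fin m → Z i) → ℝ := fun ω =>
    (1 / n : ℝ) * ∑ i, a i - (1 / (m * n) : ℝ) * ∑ i, ∑ j, ℓ i (fs i) (ω i j) with hX
  -- bounds on a and on the empirical part
  have hai : ∀ i, a i ∈ Set.Icc (0:ℝ) 1 := by
    intro i
    constructor
    · exact integral_nonneg (fun z => (hrange i (fs i) z).1)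
    · have hint : Integrable (ℓ i (fs i)) (p i) :=
        integrable_of_bddm _ (hmeas i (fs i)) 1
          (fun z => abs_le.mpr ⟨by linarith [(hrange i (fs i) z).1], (hrange i (fs i) z).2⟩)
      have := integral_mono hint (integrable_const 1) (fun z => (hrange i (fs i) z).2)
      simpa using this
  have hXbdd : ∀ ω, |X ω| ≤ 2 := by
    intro ω
    have h1 : 0 ≤ ∑ i, a i := Finset.sum_nonneg fun i _ => (hai i).1
    have h2 : ∑ i, a i ≤ n := by
      calc ∑ i, a i ≤ ∑ _i : Fin n, (1:ℝ) := Finset.sum_le_sum fun i _ => (hai i).2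
        _ = n := by simp
    have h3 : 0 ≤ ∑ i, ∑ j, ℓ i (fs i) (ω i j) :=
      Finset.sum_nonneg fun i _ => Finset.sum_nonneg fun j _ => (hrange i (fs i) (ω i j)).1
    have h4 : ∑ i, ∑ j, ℓ i (fs i) (ω i j) ≤ (m:ℝ) * n := by
      calc ∑ i, ∑ j, ℓ i (fs i) (ω i j) ≤ ∑ _i : Fin n, ∑ _j : Fin m, (1:ℝ) :=
            Finset.sum_le_sum fun i _ => Finset.sum_le_sum fun j _ =>
              (hrange i (fs i) (ω i j)).2
        _ = (m:ℝ) * n := by simp [mul_comm]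
    rw [hX, abs_le]
    constructor
    · have : (1 / ((m:ℝ) * n)) * ∑ i, ∑ j, ℓ i (fs i) (ω i j) ≤ 1 := by
        rw [div_mul_eq_mul_div, one_mul, div_le_one (by positivity)]
        exact h4
      have h5 : 0 ≤ (1 / (n:ℝ)) * ∑ i, a i := by positivity
      simp only []
      nlinarith
    · have : (1 / (n:ℝ)) * ∑ i, a i ≤ 1 := by
        rw [div_mul_eq_mul_div, one_mul, div_le_one (by positivity)]
        exact h2
      have h5 : 0 ≤ (1 / ((m:ℝ) * n)) * ∑ i, ∑ j, ℓ i (fs i) (ω i j) := by positivity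
      simp only []
      nlinarith
  have hXmeas : Measurable X := by
    apply Measurable.sub
    · exact measurable_const
    · apply Measurable.const_mul
      apply Finset.measurable_sum
      intro i _
      apply Finset.measurable_sum
      intro j _
      exact (hmeas i (fs i)).comp ((measurable_pi_apply j).comp (measurable_pi_apply i))
  have hint : Integrable (fun ω => Real.exp (t * X ω)) μ' := by
    apply integrable_of_bddm μ' (by fun_prop) (Real.exp (t * 2))
    intro ω
    rw [abs_of_pos (Real.exp_pos _)]
    apply Real.exp_le_exp.mpr
    have := hXbdd ω
    rw [abs_le] at this
    nlinarith
  -- Chernoff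
  have hch := measure_ge_le_exp_mul_mgf (X := X) (μ := μ') (t := t) ε ht0 hint
  -- mgf factorization
  have hexp_eq : ∀ ω, Real.exp (t * X ω)
      = ∏ i, ∏ j : Fin m, Real.exp ((t/K) * (a i - ℓ i (fs i) (ω i j))) := by
    intro ω
    calc Real.exp (t * X ω)
        = Real.exp (∑ i, ∑ j : Fin m, (t/K) * (a i - ℓ i (fs i) (ω i j))) := ?_
      _ = ∏ i, Real.exp (∑ j : Fin m, (t/K) * (a i - ℓ i (fs i) (ω i j))) :=
          Real.exp_sum _ _
      _ = ∏ i, ∏ j : Fin m, Real.exp ((t/K) * (a i - ℓ i (fs i) (ω i j))) :=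
          Finset.prod_congr rfl (fun i _ => Real.exp_sum _ _)
    congr 1
    rw [hX]
    simp only [mul_sub, Finset.sum_sub_distrib, ← Finset.mul_sum, Finset.sum_const,
      Finset.card_univ, Fintype.card_fin, nsmul_eq_mul]
    rw [hK]
    field_simp
  have hmgf_eq : mgf X μ' t
      = ∏ i, ∏ j : Fin m, ∫ z, Real.exp ((t/K) * (a i - ℓ i (fs i) z)) ∂p i := by
    have h1 : mgf X μ' t = ∫ ω, Real.exp (t * X ω) ∂μ' := rfl
    rw [h1]
    calc ∫ ω, Real.exp (t * X ω) ∂μ'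
        = ∫ ω, ∏ i, (∏ j : Fin m, Real.exp ((t/K) * (a i - ℓ i (fs i) (ω i j)))) ∂μ' := by
          exact integral_congr_ae (ae_of_all _ (fun ω => hexp_eq ω))
      _ = ∏ i, ∫ x : Fin m → Z i, ∏ j : Fin m,
            Real.exp ((t/K) * (a i - ℓ i (fs i) (x j))) ∂(Measure.pi fun _ : Fin m => p i) := by
          rw [hμ']
          exact integral_pi_prod (fun i => Measure.pi fun _ : Fin m => p i)
            (fun i x => ∏ j : Fin m, Real.exp ((t/K) * (a i - ℓ i (fs i) (x j))))
      _ = ∏ i, ∏ j : Fin m, ∫ z, Real.exp ((t/K) * (a i - ℓ i (fs i) z)) ∂p i := by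
          apply Finset.prod_congr rfl
          intro i _
          exact integral_pi_prod (fun _ : Fin m => p i)
            (fun _ z => Real.exp ((t/K) * (a i - ℓ i (fs i) z)))
  have hfactor : ∀ i (j : Fin m),
      ∫ z, Real.exp ((t/K) * (a i - ℓ i (fs i) z)) ∂p i ≤ Real.exp ((t/K)^2/8) := fun i j =>
    hoeffding_mgf (p i) (ℓ i (fs i)) (hmeas i (fs i)) (fun z => hrange i (fs i) z) (t/K)
  have hmgf_le : mgf X μ' t ≤ Real.exp (K * ((t/K)^2/8)) := by
    rw [hmgf_eq]
    calc ∏ i, ∏ j : Fin m, ∫ z, Real.exp ((t/K) * (a i - ℓ i (fs i) z)) ∂p i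
        ≤ ∏ i, ∏ _j : Fin m, Real.exp ((t/K)^2/8) := by
          apply Finset.prod_le_prod
          · intro i _
            apply Finset.prod_nonneg
            intro j _
            exact integral_nonneg (fun z => (Real.exp_pos _).le)
          · intro i _
            apply Finset.prod_le_prod
            · intro j _
              exact integral_nonneg (fun z => (Real.exp_pos _).le)
            · intro j _
              exact hfactor i j
      _ = Real.exp (K * ((t/K)^2/8)) := by
          rw [Finset.prod_const, Finset.prod_const, Finset.card_univ, Finset.card_univ,
            ← pow_mul, ← Real.exp_nat_mul]
          congr 1
          simp [hK, Fintype.card_fin]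
          try ring
  -- combine
  have hfinal : ((μ' {ω | ε ≤ X ω}).toReal : ℝ) ≤ Real.exp (-(2 * K) * ε^2) := by
    calc (μ' {ω | ε ≤ X ω}).toReal ≤ Real.exp (-t * ε) * mgf X μ' t := hch
      _ ≤ Real.exp (-t * ε) * Real.exp (K * ((t/K)^2/8)) :=
          mul_le_mul_of_nonneg_left hmgf_le (Real.exp_pos _).le
      _ = Real.exp (-(2 * K) * ε^2) := by
          rw [← Real.exp_add]
          congr 1
          rw [ht]
          field_simp
          ring
  rw [← ENNReal.ofReal_toReal (measure_ne_top μ' _)]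
  calc ENNReal.ofReal (μ' {ω | ε ≤ X ω}).toReal
      ≤ ENNReal.ofReal (Real.exp (-(2 * K) * ε^2)) := ENNReal.ofReal_le_ofReal hfinal
    _ = ENNReal.ofReal (Real.exp (-(2 * ((m:ℝ) * n)) * ε^2)) := by rw [hK]

/-- **Multi-task compression bound obtained from the fast-rate bound via Pinsker's
inequality.** With probability at least `1 - δ` over the i.i.d. sampling of `m`
examples per task for each of the `n` tasks, simultaneously for every global
parameter `E` and every tuple of hypotheses `f₁, …, fₙ`, the multi-task risk is
bounded by the empirical multi-task risk plus
`sqrt(((l(E) + l_E(f₁,…,fₙ))·log 2 + log(2√(mn)/δ)) / (2mn))`. -/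
theorem multitask_compression_bound_pinsker
    (n m : ℕ) (hn : 0 < n) (hm : 0 < m)
    (Z : Fin n → Type*) [∀ i, MeasurableSpace (Z i)]
    (p : ∀ i, Measure (Z i)) [∀ i, IsProbabilityMeasure (p i)]
    (F : Type*) (ℓ : ∀ i : Fin n, F → Z i → ℝ)
    (hmeas : ∀ i f, Measurable (ℓ i f))
    (hrange : ∀ i f z, ℓ i f z ∈ Set.Icc (0 : ℝ) 1)
    (𝓔 : Type*) (encE : 𝓔 → List Bool) (hencE : PrefixFreeCode encE)
    (encF : 𝓔 → (Fin n → F) → List Bool) (hencF : ∀ E, PrefixFreeCode (encF E))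
    (δ : ℝ) (hδ : 0 < δ) :
    1 - ENNReal.ofReal δ ≤
      (Measure.pi fun i => Measure.pi fun _ : Fin m => p i)
        {ω | ∀ (E : 𝓔) (fs : Fin n → F),
          (1 / n : ℝ) * ∑ i, ∫ z, ℓ i (fs i) z ∂p i ≤
            (1 / (m * n) : ℝ) * ∑ i, ∑ j, ℓ i (fs i) (ω i j) +
              Real.sqrt
                ((((encE E).length + (encF E fs).length : ℝ) * Real.log 2 +
                    Real.log (2 * Real.sqrt (m * n) / δ)) / (2 * m * n))} := by
  classical
  set μ' : Measure (∀ i, Fin m → Z i) :=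
    Measure.pi fun i => Measure.pi fun _ : Fin m => p i with hμ'
  haveI : IsProbabilityMeasure μ' := by rw [hμ']; infer_instance
  -- trivial case δ ≥ 1
  by_cases hδ1 : 1 ≤ δ
  · have h0 : (1:ℝ≥0∞) - ENNReal.ofReal δ = 0 :=
      tsub_eq_zero_of_le (ENNReal.one_le_ofReal.mpr hδ1)
    rw [h0]
    exact zero_le
  push_neg at hδ1
  -- trivial case: no global parameters
  by_cases hE : Nonempty 𝓔
  swap
  · have h0 : {ω : ∀ i, Fin m → Z i | ∀ (E : 𝓔) (fs : Fin n → F),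
          (1 / n : ℝ) * ∑ i, ∫ z, ℓ i (fs i) z ∂p i ≤
            (1 / (m * n) : ℝ) * ∑ i, ∑ j, ℓ i (fs i) (ω i j) +
              Real.sqrt
                ((((encE E).length + (encF E fs).length : ℝ) * Real.log 2 +
                    Real.log (2 * Real.sqrt (m * n) / δ)) / (2 * m * n))} = Set.univ :=
      Set.eq_univ_of_forall (fun ω E => (hE ⟨E⟩).elim)
    rw [h0, measure_univ]
    exact tsub_le_self
  -- trivial case: no hypothesis tuples
  by_cases hF : Nonempty (Fin n → F)
  swap
  · have h0 : {ω : ∀ i, Fin m → Z i | ∀ (E : 𝓔) (fs : Fin n → F),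
          (1 / n : ℝ) * ∑ i, ∫ z, ℓ i (fs i) z ∂p i ≤
            (1 / (m * n) : ℝ) * ∑ i, ∑ j, ℓ i (fs i) (ω i j) +
              Real.sqrt
                ((((encE E).length + (encF E fs).length : ℝ) * Real.log 2 +
                    Real.log (2 * Real.sqrt (m * n) / δ)) / (2 * m * n))} = Set.univ :=
      Set.eq_univ_of_forall (fun ω E fs => (hF ⟨fs⟩).elim)
    rw [h0, measure_univ]
    exact tsub_le_self
  obtain ⟨E₀⟩ := hE
  haveI : Countable 𝓔 := hencE.1.countable
  haveI : Countable (Fin n → F) := (hencF E₀).1.countable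
  -- basic positivity facts
  have hK1 : (1:ℝ) ≤ (m:ℝ) * n := by
    have h1 : (1:ℝ) ≤ (m:ℝ) := by exact_mod_cast hm
    have h2 : (1:ℝ) ≤ (n:ℝ) := by exact_mod_cast hn
    nlinarith
  have hsqrt1 : (1:ℝ) ≤ Real.sqrt ((m:ℝ) * n) := by
    rw [show (1:ℝ) = Real.sqrt 1 from (Real.sqrt_one).symm]
    exact Real.sqrt_le_sqrt hK1
  have hlog2 : (0:ℝ) ≤ Real.log 2 := Real.log_nonneg one_le_two
  have hratio : (1:ℝ) ≤ 2 * Real.sqrt ((m:ℝ) * n) / δ := by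
    rw [le_div_iff₀ hδ]
    nlinarith
  have hratio_pos : (0:ℝ) < 2 * Real.sqrt ((m:ℝ) * n) / δ := by positivity
  set c : ℝ≥0∞ := ENNReal.ofReal (δ / (2 * Real.sqrt ((m:ℝ) * n))) with hc
  -- the per-pair Chernoff + code-length computation
  have hpair : ∀ (E : 𝓔) (fs : Fin n → F),
      μ' {ω | Real.sqrt
            ((((encE E).length + (encF E fs).length : ℝ) * Real.log 2 +
                Real.log (2 * Real.sqrt (m * n) / δ)) / (2 * m * n)) ≤
          (1 / n : ℝ) * ∑ i, ∫ z, ℓ i (fs i) z ∂p i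
            - (1 / (m * n) : ℝ) * ∑ i, ∑ j, ℓ i (fs i) (ω i j)}
        ≤ ((2:ℝ≥0∞)⁻¹) ^ (encE E).length * ((2:ℝ≥0∞)⁻¹) ^ (encF E fs).length * c := by
    intro E fs
    set L1 : ℕ := (encE E).length with hL1
    set L2 : ℕ := (encF E fs).length with hL2
    set A : ℝ := ((L1 + L2 : ℝ)) * Real.log 2 + Real.log (2 * Real.sqrt ((m:ℝ) * n) / δ)
      with hA
    have hA0 : 0 ≤ A := by
      rw [hA]
      have h1 : (0:ℝ) ≤ ((L1 + L2 : ℝ)) := by positivity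
      have h2 : (0:ℝ) ≤ Real.log (2 * Real.sqrt ((m:ℝ) * n) / δ) := Real.log_nonneg hratio
      nlinarith
    have harg : 0 ≤ A / (2 * (m:ℝ) * n) := by
      apply div_nonneg hA0
      positivity
    set e : ℝ := Real.sqrt (A / (2 * (m:ℝ) * n)) with he
    have hch := chernoff_pair n m hn hm Z p F ℓ hmeas hrange fs e (Real.sqrt_nonneg _)
    have he2 : e ^ 2 = A / (2 * (m:ℝ) * n) := Real.sq_sqrt harg
    have hexp : -(2 * ((m:ℝ) * n)) * e ^ 2 = -A := by
      rw [he2]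
      field_simp
    have hval : Real.exp (-(2 * ((m:ℝ) * n)) * e ^ 2)
        = ((2:ℝ)⁻¹) ^ L1 * (((2:ℝ)⁻¹) ^ L2 * (δ / (2 * Real.sqrt ((m:ℝ) * n)))) := by
      rw [hexp, hA]
      rw [neg_add, Real.exp_add, Real.exp_neg, Real.exp_neg]
      have h1 : Real.exp (((L1 + L2 : ℝ)) * Real.log 2) = 2 ^ (L1 + L2) := by
        rw [show ((L1 + L2 : ℝ)) = ((L1 + L2 : ℕ) : ℝ) by push_cast; ring]
        rw [Real.exp_nat_mul, Real.exp_log two_pos]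
      have h2 : Real.exp (Real.log (2 * Real.sqrt ((m:ℝ) * n) / δ))
          = 2 * Real.sqrt ((m:ℝ) * n) / δ := Real.exp_log hratio_pos
      rw [h1, h2, pow_add]
      rw [mul_inv, inv_pow, inv_pow, inv_div]
      ring
    calc μ' {ω | e ≤ (1 / n : ℝ) * ∑ i, ∫ z, ℓ i (fs i) z ∂p i
            - (1 / (m * n) : ℝ) * ∑ i, ∑ j, ℓ i (fs i) (ω i j)}
        ≤ ENNReal.ofReal (Real.exp (-(2 * ((m:ℝ) * n)) * e ^ 2)) := hch
      _ = ((2:ℝ≥0∞)⁻¹) ^ L1 * (((2:ℝ≥0∞)⁻¹) ^ L2 * c) := by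
          rw [hval, ENNReal.ofReal_mul (by positivity), ENNReal.ofReal_mul (by positivity)]
          congr 1
          · rw [ENNReal.ofReal_pow (by norm_num), ENNReal.ofReal_inv_of_pos (by norm_num),
              ENNReal.ofReal_ofNat]
          congr 1
          rw [ENNReal.ofReal_pow (by norm_num), ENNReal.ofReal_inv_of_pos (by norm_num),
            ENNReal.ofReal_ofNat]
      _ = ((2:ℝ≥0∞)⁻¹) ^ L1 * ((2:ℝ≥0∞)⁻¹) ^ L2 * c := by ring
  -- the union bound
  set S : Set (∀ i, Fin m → Z i) := {ω | ∀ (E : 𝓔) (fs : Fin n → F),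
          (1 / n : ℝ) * ∑ i, ∫ z, ℓ i (fs i) z ∂p i ≤
            (1 / (m * n) : ℝ) * ∑ i, ∑ j, ℓ i (fs i) (ω i j) +
              Real.sqrt
                ((((encE E).length + (encF E fs).length : ℝ) * Real.log 2 +
                    Real.log (2 * Real.sqrt (m * n) / δ)) / (2 * m * n))} with hS
  have hsub : Sᶜ ⊆ ⋃ (q : 𝓔 × (Fin n → F)),
      {ω | Real.sqrt
            ((((encE q.1).length + (encF q.1 q.2).length : ℝ) * Real.log 2 +
                Real.log (2 * Real.sqrt (m * n) / δ)) / (2 * m * n)) ≤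
          (1 / n : ℝ) * ∑ i, ∫ z, ℓ i (q.2 i) z ∂p i
            - (1 / (m * n) : ℝ) * ∑ i, ∑ j, ℓ i (q.2 i) (ω i j)} := by
    intro ω hω
    rw [Set.mem_compl_iff, hS, Set.mem_setOf_eq] at hω
    push_neg at hω
    obtain ⟨E, fs, hEfs⟩ := hω
    apply Set.mem_iUnion.mpr
    refine ⟨(E, fs), ?_⟩
    rw [Set.mem_setOf_eq]
    linarith
  have hcompl : μ' Sᶜ ≤ ENNReal.ofReal δ := by
    calc μ' Sᶜ
        ≤ μ' (⋃ (q : 𝓔 × (Fin n → F)),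
          {ω | Real.sqrt
                ((((encE q.1).length + (encF q.1 q.2).length : ℝ) * Real.log 2 +
                    Real.log (2 * Real.sqrt (m * n) / δ)) / (2 * m * n)) ≤
              (1 / n : ℝ) * ∑ i, ∫ z, ℓ i (q.2 i) z ∂p i
                - (1 / (m * n) : ℝ) * ∑ i, ∑ j, ℓ i (q.2 i) (ω i j)}) := measure_mono hsub
      _ ≤ ∑' (q : 𝓔 × (Fin n → F)), μ'
          {ω | Real.sqrt
                ((((encE q.1).length + (encF q.1 q.2).length : ℝ) * Real.log 2 +
                    Real.log (2 * Real.sqrt (m * n) / δ)) / (2 * m * n)) ≤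
              (1 / n : ℝ) * ∑ i, ∫ z, ℓ i (q.2 i) z ∂p i
                - (1 / (m * n) : ℝ) * ∑ i, ∑ j, ℓ i (q.2 i) (ω i j)} := measure_iUnion_le _
      _ ≤ ∑' (q : 𝓔 × (Fin n → F)),
            ((2:ℝ≥0∞)⁻¹) ^ (encE q.1).length * ((2:ℝ≥0∞)⁻¹) ^ (encF q.1 q.2).length * c :=
          ENNReal.tsum_le_tsum (fun q => hpair q.1 q.2)
      _ = ∑' (E : 𝓔), ∑' (fs : Fin n → F),
            ((2:ℝ≥0∞)⁻¹) ^ (encE E).length * ((2:ℝ≥0∞)⁻¹) ^ (encF E fs).length * c :=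
          ENNReal.tsum_prod'
      _ ≤ ∑' (E : 𝓔), ((2:ℝ≥0∞)⁻¹) ^ (encE E).length * c := by
          apply ENNReal.tsum_le_tsum
          intro E
          calc ∑' (fs : Fin n → F),
                ((2:ℝ≥0∞)⁻¹) ^ (encE E).length * ((2:ℝ≥0∞)⁻¹) ^ (encF E fs).length * c
              = ∑' (fs : Fin n → F),
                (((2:ℝ≥0∞)⁻¹) ^ (encE E).length * c) * ((2:ℝ≥0∞)⁻¹) ^ (encF E fs).length := by
                apply tsum_congr
                intro fs
                ring
            _ = (((2:ℝ≥0∞)⁻¹) ^ (encE E).length * c) *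
                ∑' (fs : Fin n → F), ((2:ℝ≥0∞)⁻¹) ^ (encF E fs).length :=
                ENNReal.tsum_mul_left
            _ ≤ (((2:ℝ≥0∞)⁻¹) ^ (encE E).length * c) * 1 :=
                mul_le_mul_right (kraft_tsum (encF E) (hencF E)) _
            _ = ((2:ℝ≥0∞)⁻¹) ^ (encE E).length * c := mul_one _
      _ = (∑' (E : 𝓔), ((2:ℝ≥0∞)⁻¹) ^ (encE E).length) * c := ENNReal.tsum_mul_right
      _ ≤ 1 * c := mul_le_mul_left (kraft_tsum encE hencE) _
      _ = c := one_mul _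
      _ ≤ ENNReal.ofReal δ := by
          rw [hc]
          apply ENNReal.ofReal_le_ofReal
          apply div_le_self hδ.le
          nlinarith
  have hone : (1:ℝ≥0∞) ≤ μ' S + ENNReal.ofReal δ := by
    calc (1:ℝ≥0∞) = μ' Set.univ := measure_univ.symm
      _ = μ' (S ∪ Sᶜ) := by rw [Set.union_compl_self]
      _ ≤ μ' S + μ' Sᶜ := measure_union_le _ _
      _ ≤ μ' S + ENNReal.ofReal δ := add_le_add_right hcompl _
  exact tsub_le_iff_right.mpr hone
end

section
/- Let t be a positive integer, let 0 ≤ μ ≤ t, and let Y be a binomial random variable with distribution B(t, μ/t). Then E[ exp( t · kl( Y/t | μ/t ) ) ] ≤ 2·sqrt(t). -/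
open MeasureTheory
open scoped ENNReal

/-- The probability that a `B(t, p)` binomial random variable takes the value `k`:
`(t choose k) · p^k · (1-p)^(t-k)`. -/
noncomputable def binomialPMF (t : ℕ) (P : ℝ) (k : ℕ) : ℝ :=
  (t.choose k : ℝ) * P ^ k * (1 - P) ^ (t - k)

/-- Exponential of an extended real number, valued in `ℝ≥0∞`
(with `exp(+∞) = +∞` and `exp(-∞) = 0`). -/
noncomputable def erealExp (x : EReal) : ℝ≥0∞ :=
  if x = ⊤ then ⊤ else if x = ⊥ then 0 else ENNReal.ofReal (Real.exp x.toReal)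

noncomputable def maurerG (t k : ℕ) : ℝ :=
  (t.choose k : ℝ) * ((k : ℝ)/t)^k * (((t : ℝ) - k)/t)^(t-k)

section StirlingBounds
open Stirling Filter

lemma maurer_stirling_ge (n : ℕ) (hn : 1 ≤ n) : Real.sqrt Real.pi ≤ stirlingSeq n := by
  obtain ⟨m, rfl⟩ := Nat.exists_eq_add_of_le hn
  have ht : Tendsto (stirlingSeq ∘ Nat.succ) atTop (nhds (Real.sqrt Real.pi)) :=
    tendsto_stirlingSeq_sqrt_pi.comp (tendsto_add_atTop_nat 1)
  simpa [Nat.add_comm] using stirlingSeq'_antitone.le_of_tendsto ht m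

lemma maurer_stirling_le (n : ℕ) (hn : 1 ≤ n) : stirlingSeq n ≤ Real.exp 1 / Real.sqrt 2 := by
  obtain ⟨m, rfl⟩ := Nat.exists_eq_add_of_le hn
  have := stirlingSeq'_antitone (Nat.zero_le m)
  simpa [Nat.add_comm, stirlingSeq_one] using this

lemma maurer_fact_eq (n : ℕ) (hn : 1 ≤ n) :
    (n.factorial : ℝ) = stirlingSeq n * (Real.sqrt (2*n) * ((n:ℝ)/Real.exp 1)^n) := by
  have hn' : (0:ℝ) < n := by exact_mod_cast hn
  rw [stirlingSeq]
  have h1 : (0:ℝ) < Real.sqrt (2*n) := Real.sqrt_pos.2 (by positivity)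
  have h2 : (0:ℝ) < ((n:ℝ)/Real.exp 1)^n := by positivity
  field_simp

lemma maurer_fact_ge (n : ℕ) (hn : 1 ≤ n) :
    Real.sqrt Real.pi * (Real.sqrt (2*n) * ((n:ℝ)/Real.exp 1)^n) ≤ (n.factorial : ℝ) := by
  rw [maurer_fact_eq n hn]
  have h : (0:ℝ) ≤ Real.sqrt (2*n) * ((n:ℝ)/Real.exp 1)^n := by positivity
  exact mul_le_mul_of_nonneg_right (maurer_stirling_ge n hn) h

lemma maurer_fact_le (n : ℕ) (hn : 1 ≤ n) :
    (n.factorial : ℝ) ≤ Real.exp 1 / Real.sqrt 2 * (Real.sqrt (2*n) * ((n:ℝ)/Real.exp 1)^n) := by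
  rw [maurer_fact_eq n hn]
  have h : (0:ℝ) ≤ Real.sqrt (2*n) * ((n:ℝ)/Real.exp 1)^n := by positivity
  exact mul_le_mul_of_nonneg_right (maurer_stirling_le n hn) h

end StirlingBounds

lemma maurer_sqrt_add_le (x y : ℝ) (hx : 0 ≤ x) (hy : 0 ≤ y) :
    Real.sqrt (x + y) ≤ Real.sqrt x + Real.sqrt y := by
  rw [show Real.sqrt x + Real.sqrt y
      = Real.sqrt ((Real.sqrt x + Real.sqrt y)^2) from
    (Real.sqrt_sq (by positivity)).symm]
  apply Real.sqrt_le_sqrt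
  nlinarith [Real.sq_sqrt hx, Real.sq_sqrt hy, Real.sqrt_nonneg x, Real.sqrt_nonneg y]

lemma maurerG_nonneg {t k : ℕ} (hk : k ≤ t) : 0 ≤ maurerG t k := by
  have h : (0:ℝ) ≤ (t:ℝ) - k := sub_nonneg.2 (Nat.cast_le.2 hk)
  unfold maurerG; positivity

lemma maurer_le_two_sqrt {S x : ℝ} (hS : 0 ≤ S) (hx : 0 ≤ x) (h : S^2 ≤ 4*x) :
    S ≤ 2 * Real.sqrt x := by
  rw [show 2 * Real.sqrt x = Real.sqrt (4*x) by
    rw [show ((4:ℝ)*x) = 2^2*x by ring, Real.sqrt_mul (by positivity),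
      Real.sqrt_sq (by norm_num : (0:ℝ) ≤ 2)]]
  rw [Real.le_sqrt hS (by linarith)]
  exact h

lemma maurerG_zero (t : ℕ) (ht : 0 < t) : maurerG t 0 = 1 := by
  have h : (t:ℝ) ≠ 0 := Nat.cast_ne_zero.2 ht.ne'
  simp [maurerG, div_self h]

lemma maurerG_self (t : ℕ) (ht : 0 < t) : maurerG t t = 1 := by
  have h : (t:ℝ) ≠ 0 := Nat.cast_ne_zero.2 ht.ne'
  simp [maurerG, div_self h]

lemma maurer_sum_inv_sqrt (n : ℕ) (hn : 1 ≤ n) :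
    ∑ k ∈ Finset.range n, Real.sqrt (1/((k+1 : ℕ):ℝ)) ≤ 2 * Real.sqrt n - 1 := by
  induction n, hn using Nat.le_induction with
  | base => norm_num
  | succ n hn ih =>
    rw [Finset.sum_range_succ]
    have ha2 : Real.sqrt n ^ 2 = (n:ℝ) := Real.sq_sqrt (by positivity)
    have hb2 : Real.sqrt (n+1) ^ 2 = (n:ℝ)+1 := Real.sq_sqrt (by positivity)
    have hb0 : (0:ℝ) < Real.sqrt ((n:ℝ)+1) := Real.sqrt_pos.2 (by positivity)
    have ha0 : (0:ℝ) ≤ Real.sqrt n := Real.sqrt_nonneg _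
    have key : Real.sqrt (1/((n+1 : ℕ):ℝ)) ≤ 2*Real.sqrt ((n:ℝ)+1) - 2*Real.sqrt n := by
      rw [show ((n+1:ℕ):ℝ) = (n:ℝ)+1 by push_cast; ring, one_div, Real.sqrt_inv,
        inv_le_iff_one_le_mul₀ hb0]
      nlinarith [sq_nonneg (Real.sqrt ((n:ℝ)+1) - Real.sqrt n)]
    have : ((n+1:ℕ):ℝ) = (n:ℝ)+1 := by push_cast; ring
    rw [this]; rw [this] at key
    linarith [ih]
lemma maurerG_le (t k : ℕ) (hk1 : 1 ≤ k) (hk2 : k < t) :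
    maurerG t k ≤ Real.exp 1/(2*Real.pi) *
      (Real.sqrt (1/(k:ℝ)) + Real.sqrt (1/((t-k : ℕ):ℝ))) := by
  have hm1 : 1 ≤ t - k := by omega
  have htkm : t = k + (t - k) := by omega
  set m : ℕ := t - k with hm
  set K : ℝ := (k:ℝ) with hKdef
  set M : ℝ := (m:ℝ) with hMdef
  have hK0 : (0:ℝ) < K := by rw [hKdef]; exact_mod_cast hk1
  have hM0 : (0:ℝ) < M := by rw [hMdef]; exact_mod_cast hm1
  have hT : (t:ℝ) = K + M := by rw [htkm]; push_cast; ring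
  have hKM0 : (0:ℝ) < K + M := by linarith
  have hE : (0:ℝ) < Real.exp 1 := Real.exp_pos 1
  have hπ : (0:ℝ) < Real.pi := Real.pi_pos
  set A : ℝ := (K/Real.exp 1)^k with hA
  set B : ℝ := (M/Real.exp 1)^m with hB
  have hA0 : 0 < A := by positivity
  have hB0 : 0 < B := by positivity
  set S : ℝ := Real.sqrt (1/K) + Real.sqrt (1/M) with hS
  have hS0 : 0 ≤ S := by positivity
  -- rewrite g
  have hgT : maurerG t k = (t.choose k : ℝ) * ((K/(K+M))^k * (M/(K+M))^m) := by
    rw [maurerG, hT, ← hm, add_sub_cancel_left]; ring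
  have hch : (t.choose k : ℝ) * ((k.factorial : ℝ) * (m.factorial : ℝ)) = (t.factorial : ℝ) := by
    rw [hm]
    exact_mod_cast congrArg (Nat.cast (R := ℝ))
      (by rw [← mul_assoc]; exact Nat.choose_mul_factorial_mul_factorial hk2.le)
  have hfpos : (0:ℝ) < (k.factorial : ℝ) * (m.factorial : ℝ) := by positivity
  rw [hgT, ← mul_le_mul_iff_of_pos_right hfpos]
  have hfk := maurer_fact_ge k hk1
  have hfm := maurer_fact_ge m hm1
  have hft := maurer_fact_le t (by omega)
  rw [hT] at hft
  calc (t.choose k : ℝ) * ((K/(K+M))^k * (M/(K+M))^m) * ((k.factorial : ℝ) * m.factorial)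
      = (t.factorial : ℝ) * ((K/(K+M))^k * (M/(K+M))^m) := by rw [← hch]; ring
    _ ≤ (Real.exp 1 / Real.sqrt 2 * (Real.sqrt (2*(K+M)) * ((K+M)/Real.exp 1)^t))
          * ((K/(K+M))^k * (M/(K+M))^m) :=
        mul_le_mul_of_nonneg_right hft (by positivity)
    _ = Real.exp 1 * Real.sqrt (K+M) * (A*B) := by
        have hpow : ((K+M)/Real.exp 1)^t * ((K/(K+M))^k * (M/(K+M))^m) = A*B := by
          rw [htkm, pow_add, hA, hB,
            show ((K+M)/Real.exp 1)^k * ((K+M)/Real.exp 1)^m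
                * ((K/(K+M))^k * (M/(K+M))^m)
              = ((K+M)/Real.exp 1 * (K/(K+M)))^k * ((K+M)/Real.exp 1 * (M/(K+M)))^m by
              rw [mul_pow, mul_pow]; ring]
          have e1 : (K+M)/Real.exp 1 * (K/(K+M)) = K/Real.exp 1 := by field_simp
          have e2 : (K+M)/Real.exp 1 * (M/(K+M)) = M/Real.exp 1 := by field_simp
          rw [e1, e2]
        have hs2 : Real.sqrt (2*(K+M)) = Real.sqrt 2 * Real.sqrt (K+M) :=
          Real.sqrt_mul (by norm_num) _
        have hs2ne : Real.sqrt 2 ≠ 0 := by positivity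
        rw [← hpow, hs2]
        field_simp
    _ ≤ Real.exp 1 * (S * (Real.sqrt K * Real.sqrt M)) * (A*B) := by
        have h1 : Real.sqrt (1/K) * Real.sqrt K = 1 := by
          rw [← Real.sqrt_mul (by positivity), one_div_mul_cancel hK0.ne', Real.sqrt_one]
        have h2 : Real.sqrt (1/M) * Real.sqrt M = 1 := by
          rw [← Real.sqrt_mul (by positivity), one_div_mul_cancel hM0.ne', Real.sqrt_one]
        have hSKM : S * (Real.sqrt K * Real.sqrt M) = Real.sqrt M + Real.sqrt K := by
          rw [hS]; linear_combination Real.sqrt M * h1 + Real.sqrt K * h2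
        have : Real.sqrt (K+M) ≤ S * (Real.sqrt K * Real.sqrt M) := by
          rw [hSKM]
          have := maurer_sqrt_add_le K M hK0.le hM0.le
          linarith
        have hAB : (0:ℝ) ≤ A*B := by positivity
        exact mul_le_mul_of_nonneg_right (mul_le_mul_of_nonneg_left this hE.le) hAB
    _ ≤ Real.exp 1/(2*Real.pi) * S * ((k.factorial : ℝ) * (m.factorial : ℝ)) := by
        have hps : Real.sqrt Real.pi * Real.sqrt Real.pi = Real.pi := Real.mul_self_sqrt hπ.le
        have h22 : Real.sqrt 2 * Real.sqrt 2 = 2 := Real.mul_self_sqrt (by norm_num)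
        have hk2' : Real.sqrt (2*K) = Real.sqrt 2 * Real.sqrt K := Real.sqrt_mul (by norm_num) _
        have hm2' : Real.sqrt (2*M) = Real.sqrt 2 * Real.sqrt M := Real.sqrt_mul (by norm_num) _
        simp only [← hKdef, ← hMdef] at hfk hfm
        have hprod : (Real.sqrt Real.pi * (Real.sqrt (2*K) * A))
            * (Real.sqrt Real.pi * (Real.sqrt (2*M) * B))
            = 2*Real.pi*(Real.sqrt K * Real.sqrt M * (A*B)) := by
          rw [hk2', hm2',
            show Real.sqrt Real.pi * (Real.sqrt 2 * Real.sqrt K * A)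
                * (Real.sqrt Real.pi * (Real.sqrt 2 * Real.sqrt M * B))
              = (Real.sqrt Real.pi * Real.sqrt Real.pi)
                * ((Real.sqrt 2 * Real.sqrt 2) * (Real.sqrt K * Real.sqrt M * (A*B))) by ring,
            hps, h22]
          ring
        have hge : 2*Real.pi*(Real.sqrt K * Real.sqrt M * (A*B))
            ≤ (k.factorial : ℝ) * (m.factorial : ℝ) := by
          rw [← hprod]
          exact mul_le_mul hfk hfm (by positivity) (by positivity)
        calc Real.exp 1 * (S * (Real.sqrt K * Real.sqrt M)) * (A*B)
            = Real.exp 1/(2*Real.pi) * S * (2*Real.pi*(Real.sqrt K * Real.sqrt M * (A*B))) := by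
              field_simp
          _ ≤ Real.exp 1/(2*Real.pi) * S * ((k.factorial : ℝ) * (m.factorial : ℝ)) :=
              mul_le_mul_of_nonneg_left hge (by positivity)
    _ = Real.exp 1/(2*Real.pi) * (Real.sqrt (1/K) + Real.sqrt (1/M))
          * ((k.factorial : ℝ) * (m.factorial : ℝ)) := by rw [hS]
lemma maurer_sum_le_big (t : ℕ) (ht : 18 ≤ t) :
    ∑ k ∈ Finset.range (t+1), maurerG t k ≤ 2 * Real.sqrt t := by
  set n : ℕ := t - 1 with hn
  have hn1 : 1 ≤ n := by omega
  have htn : t = n + 1 := by omega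
  set c : ℝ := Real.exp 1/(2*Real.pi) with hc
  have hπ := Real.pi_pos
  have hc0 : 0 ≤ c := by positivity
  have h1 : ∑ k ∈ Finset.range (t+1), maurerG t k
      = (∑ k ∈ Finset.range n, maurerG t (k+1)) + maurerG t 0 + maurerG t t := by
    rw [Finset.sum_range_succ, show t = n+1 from htn, Finset.sum_range_succ']
  have hmid : ∑ k ∈ Finset.range n, maurerG t (k+1)
      ≤ c * ((∑ k ∈ Finset.range n, Real.sqrt (1/((k+1:ℕ):ℝ)))
           + (∑ k ∈ Finset.range n, Real.sqrt (1/((t-(k+1):ℕ):ℝ)))) := by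
    rw [← Finset.sum_add_distrib, Finset.mul_sum]
    refine Finset.sum_le_sum fun k hk => ?_
    have hk' : k < n := Finset.mem_range.1 hk
    exact maurerG_le t (k+1) (by omega) (by omega)
  have hrefl : ∑ k ∈ Finset.range n, Real.sqrt (1/((t-(k+1):ℕ):ℝ))
      = ∑ k ∈ Finset.range n, Real.sqrt (1/((k+1:ℕ):ℝ)) := by
    rw [← Finset.sum_range_reflect (fun j => Real.sqrt (1/((j+1:ℕ):ℝ))) n]
    refine Finset.sum_congr rfl fun k hk => ?_
    have hk' : k < n := Finset.mem_range.1 hk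
    have : t - (k+1) = n - 1 - k + 1 := by omega
    rw [this]
  have hsum := maurer_sum_inv_sqrt n hn1
  have hsn : Real.sqrt n ≤ Real.sqrt t := Real.sqrt_le_sqrt (by exact_mod_cast (by omega : n ≤ t))
  have hst : (4.2426:ℝ) ≤ Real.sqrt t := by
    have h18 : (18:ℝ) ≤ (t:ℝ) := by exact_mod_cast ht
    rw [show (4.2426:ℝ) = Real.sqrt (4.2426^2) from (Real.sqrt_sq (by norm_num)).symm]
    apply Real.sqrt_le_sqrt; nlinarith
  have hcb : c ≤ 0.4327 := by
    rw [hc, div_le_iff₀ (by positivity)]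
    nlinarith [Real.exp_one_lt_d9, Real.pi_gt_d6]
  have hS0 : (0:ℝ) ≤ 2*Real.sqrt n - 1 := by
    have : (1:ℝ) ≤ Real.sqrt n := by
      rw [show (1:ℝ) = Real.sqrt 1 from (Real.sqrt_one).symm]
      exact Real.sqrt_le_sqrt (by exact_mod_cast hn1)
    linarith
  rw [hrefl] at hmid
  rw [h1, maurerG_zero t (by omega), maurerG_self t (by omega)]
  have hmid2 : ∑ k ∈ Finset.range n, maurerG t (k+1) ≤ c * (2*(2*Real.sqrt n - 1)) := by
    refine hmid.trans ?_
    have h2 : (∑ k ∈ Finset.range n, Real.sqrt (1/((k+1:ℕ):ℝ)))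
        + (∑ k ∈ Finset.range n, Real.sqrt (1/((k+1:ℕ):ℝ))) ≤ 2*(2*Real.sqrt n - 1) := by
      linarith
    exact mul_le_mul_of_nonneg_left h2 hc0
  nlinarith [hmid2, hS0, hsn, hst, hcb, hc0,
    mul_nonneg hc0 hS0]
lemma erealExp_coe (x : ℝ) : erealExp ((x : ℝ) : EReal) = ENNReal.ofReal (Real.exp x) := by
  simp [erealExp]

lemma maurer_pointwise (t k : ℕ) (ht : 0 < t) (hk : k ≤ t) (μ : ℝ) (hμ0 : 0 ≤ μ) (hμt : μ ≤ t) :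
    ENNReal.ofReal (binomialPMF t (μ / t) k) *
      erealExp (((t : ℝ) : EReal) * bernKL ((k : ℝ) / t) (μ / t)) ≤
    ENNReal.ofReal (maurerG t k) := by
  have hT : (0:ℝ) < t := Nat.cast_pos.2 ht
  rcases eq_or_lt_of_le hμ0 with hμz | hμpos
  · -- μ = 0
    rw [show μ / (t:ℝ) = 0 by rw [← hμz, zero_div]]
    rcases Nat.eq_zero_or_pos k with rfl | hkpos
    · have h1 : binomialPMF t 0 0 = 1 := by simp [binomialPMF]
      have h2 : bernKL (((0:ℕ):ℝ)/(t:ℝ)) 0 = ((0:ℝ) : EReal) := by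
        simp [bernKL]
      rw [h1, h2, show ((t : ℝ) : EReal) * ((0:ℝ) : EReal) = ((0:ℝ):EReal) by
          rw [← EReal.coe_mul, mul_zero],
        erealExp_coe, Real.exp_zero, maurerG_zero t ht]
      norm_num
    · have h1 : binomialPMF t 0 k = 0 := by
        simp [binomialPMF, zero_pow hkpos.ne']
      rw [h1, ENNReal.ofReal_zero, zero_mul]
      exact zero_le
  · rcases eq_or_lt_of_le hμt with hμt' | hμlt
    · -- μ = t
      rw [show μ / (t:ℝ) = 1 by rw [hμt', div_self hT.ne']]
      rcases eq_or_lt_of_le hk with rfl | hklt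
      · have h1 : binomialPMF k 1 k = 1 := by simp [binomialPMF]
        have h2 : bernKL ((k:ℝ)/(k:ℝ)) 1 = ((0:ℝ) : EReal) := by
          rw [div_self hT.ne']
          simp [bernKL]
        rw [h1, h2, show ((k : ℝ) : EReal) * ((0:ℝ) : EReal) = ((0:ℝ):EReal) by
            rw [← EReal.coe_mul, mul_zero],
          erealExp_coe, Real.exp_zero, maurerG_self k ht]
        norm_num
      · have h1 : binomialPMF t 1 k = 0 := by
          simp [binomialPMF, zero_pow (by omega : t - k ≠ 0)]
        rw [h1, ENNReal.ofReal_zero, zero_mul]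
        exact zero_le
    · -- 0 < μ < t
      set p : ℝ := μ / t with hp
      set q : ℝ := (k:ℝ) / t with hq
      have hp0 : 0 < p := div_pos hμpos hT
      have hp1 : p < 1 := (div_lt_one hT).2 hμlt
      have hq0 : 0 ≤ q := by positivity
      have hq1 : q ≤ 1 := (div_le_one hT).2 (Nat.cast_le.2 hk)
      have hcond : ¬((0 < q ∧ p = 0) ∨ (q < 1 ∧ p = 1)) := by
        rintro (⟨_, h⟩ | ⟨_, h⟩) <;> linarith
      have hKL : bernKL q p
          = ((q * Real.log (q/p) + (1-q) * Real.log ((1-q)/(1-p)) : ℝ) : EReal) := by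
        rw [bernKL, if_neg hcond]
      have hpmf0 : 0 ≤ binomialPMF t p k := by
        have : (0:ℝ) ≤ 1 - p := by linarith
        unfold binomialPMF; positivity
      rw [hKL, ← EReal.coe_mul, erealExp_coe, ← ENNReal.ofReal_mul hpmf0]
      apply ENNReal.ofReal_le_ofReal
      apply le_of_eq
      have hm : ((t-k:ℕ):ℝ) = (t:ℝ) - k := Nat.cast_sub hk
      have h1 : (t:ℝ) * q = k := by rw [hq]; field_simp
      have h2 : (t:ℝ) * (1-q) = ((t-k:ℕ):ℝ) := by rw [hm, hq]; field_simp
      have hTr : (t:ℝ) * (q * Real.log (q/p) + (1-q) * Real.log ((1-q)/(1-p)))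
          = (k:ℝ) * Real.log (q/p) + ((t-k:ℕ):ℝ) * Real.log ((1-q)/(1-p)) := by
        linear_combination Real.log (q/p) * h1 + Real.log ((1-q)/(1-p)) * h2
      rw [hTr, Real.exp_add, Real.exp_nat_mul, Real.exp_nat_mul]
      have hfac1 : p^k * Real.exp (Real.log (q/p))^k = q^k := by
        rcases Nat.eq_zero_or_pos k with rfl | hkpos
        · simp
        · have hqpos : 0 < q := by
            rw [hq]; exact div_pos (by exact_mod_cast hkpos) hT
          rw [Real.exp_log (div_pos hqpos hp0), ← mul_pow]
          congr 1
          field_simp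
      have hfac2 : (1-p)^(t-k) * Real.exp (Real.log ((1-q)/(1-p)))^(t-k)
          = (((t:ℝ) - k)/t)^(t-k) := by
        have hQ : 1 - q = ((t:ℝ) - k)/t := by rw [hq]; field_simp
        rcases Nat.eq_zero_or_pos (t-k) with he | hpos
        · rw [he]; simp
        · have hk' : k < t := by omega
          have hQpos : 0 < 1 - q := by
            rw [hQ]
            have : (k:ℝ) < t := by exact_mod_cast hk'
            exact div_pos (by linarith) hT
          have hPpos : 0 < 1 - p := by linarith
          rw [Real.exp_log (div_pos hQpos hPpos), ← mul_pow, hQ]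
          congr 1
          field_simp
      simp only [binomialPMF, maurerG]
      calc (t.choose k : ℝ) * p^k * (1-p)^(t-k)
            * (Real.exp (Real.log (q/p))^k * Real.exp (Real.log ((1-q)/(1-p)))^(t-k))
          = (t.choose k : ℝ) * (p^k * Real.exp (Real.log (q/p))^k)
            * ((1-p)^(t-k) * Real.exp (Real.log ((1-q)/(1-p)))^(t-k)) := by ring
        _ = (t.choose k : ℝ) * ((k:ℝ)/t)^k * (((t:ℝ) - k)/t)^(t-k) := by
            rw [hfac1, hfac2, hq]

set_option maxHeartbeats 4000000 in
lemma maurer_sum_le (t : ℕ) (ht : 0 < t) :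
    ∑ k ∈ Finset.range (t+1), maurerG t k ≤ 2 * Real.sqrt t := by
  by_cases h : 18 ≤ t
  · exact maurer_sum_le_big t h
  · push_neg at h
    interval_cases t <;>
      (refine maurer_le_two_sqrt
        (Finset.sum_nonneg fun k hk => maurerG_nonneg (Nat.lt_succ_iff.1 (Finset.mem_range.1 hk)))
        (by positivity) ?_ ;
       norm_num [Finset.sum_range_succ, maurerG, Nat.choose])

/-- **Maurer's bound on the KL moment generating function of a binomial.**
For a positive integer `t`, `0 ≤ μ ≤ t`, and `Y ∼ B(t, μ/t)`:
`E[exp(t · kl(Y/t | μ/t))] ≤ 2√t`. -/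
theorem binomial_kl_mgf_bound (t : ℕ) (ht : 0 < t) (μ : ℝ) (hμ0 : 0 ≤ μ) (hμt : μ ≤ t) :
    ∑ k ∈ Finset.range (t + 1),
        ENNReal.ofReal (binomialPMF t (μ / t) k) *
          erealExp (((t : ℝ) : EReal) * bernKL ((k : ℝ) / t) (μ / t)) ≤
      ENNReal.ofReal (2 * Real.sqrt t) := by
  calc ∑ k ∈ Finset.range (t + 1),
        ENNReal.ofReal (binomialPMF t (μ / t) k) *
          erealExp (((t : ℝ) : EReal) * bernKL ((k : ℝ) / t) (μ / t))
      ≤ ∑ k ∈ Finset.range (t + 1), ENNReal.ofReal (maurerG t k) :=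
        Finset.sum_le_sum fun k hk =>
          maurer_pointwise t k ht (Nat.lt_succ_iff.1 (Finset.mem_range.1 hk)) μ hμ0 hμt
    _ = ENNReal.ofReal (∑ k ∈ Finset.range (t + 1), maurerG t k) :=
        (ENNReal.ofReal_sum_of_nonneg fun k hk =>
          maurerG_nonneg (Nat.lt_succ_iff.1 (Finset.mem_range.1 hk))).symm
    _ ≤ ENNReal.ofReal (2 * Real.sqrt t) :=
        ENNReal.ofReal_le_ofReal (maurer_sum_le t ht)
end
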